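/- arXiv:1705.00170 — 7 statements merged into one kernel-verified Lean document; each statement's English description precedes it below -/
import Mathlib

section
/- Let J be a real antisymmetric d×d matrix, and let γ, μ ∈ ℝ. Consider the real 2d×2d block matrix B = [[μJ, −I],[I, γI + μJ]]. Then the spectrum of B over ℂ (i.e., of its complexification) equals {μλ + γ/2 + c : λ ∈ σ(J)} ∪ {μλ + γ/2 − c : λ ∈ σ(J)}, where σ(J) denotes the complex spectrum of J and c ∈ ℂ is any complex number with c² = (γ/2)² − 1. -/
/-!
Write `M = μJ`. For `z ∈ ℂ`, `z - B` is the block matrix `[[z - M, 1], [-1, z - γ - M]]`, whose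
determinant is `det (1 + (z - M)(z - γ - M)) = det (q (z - M))` with
`q X = X² - γX + 1 = (X - r₁)(X - r₂)`, `r₁,₂ = γ/2 ± c`. Hence `z ∈ σ(B)` iff `z - r₁ ∈ σ(M)` or
`z - r₂ ∈ σ(M)`, and `σ(μJ) = μ σ(J)`.
-/

open Matrix Pointwise

namespace Matrix

variable {n R K : Type*} [Fintype n] [DecidableEq n] [CommRing R] [Field K]

theorem det_fromBlocks_zero_neg_one_one_zero :
    (fromBlocks 0 (-1) 1 0 : Matrix (n ⊕ n) (n ⊕ n) R).det = 1 := by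
  have : (fromBlocks 0 (-1) 1 0 : Matrix (n ⊕ n) (n ⊕ n) R) =
      fromBlocks 1 (-1) 0 1 * fromBlocks 1 0 1 1 * fromBlocks 1 (-1) 0 1 := by
    simp [fromBlocks_multiply]
  simp [this]

theorem det_fromBlocks_one_neg_one (A D : Matrix n n R) :
    (fromBlocks A 1 (-1) D).det = (1 + A * D).det := by
  calc (fromBlocks A 1 (-1) D).det
      = (fromBlocks A 1 (-1) D * fromBlocks 0 (-1) 1 0).det := by
        rw [det_mul, det_fromBlocks_zero_neg_one_one_zero, mul_one]
    _ = (1 + A * D).det := by simp [fromBlocks_multiply]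

theorem mem_spectrum_iff_det_eq_zero {A : Matrix n n K} {z : K} :
    z ∈ spectrum K A ↔ (z • 1 - A).det = 0 := by
  rw [mem_spectrum_iff_isRoot_charpoly, Polynomial.IsRoot.def, eval_charpoly, scalar_apply,
    smul_one_eq_diagonal]

theorem spectrum_fromBlocks_neg_one_one (M : Matrix n n K) {γ r₁ r₂ : K}
    (hsum : r₁ + r₂ = γ) (hprod : r₁ * r₂ = 1) :
    spectrum K (fromBlocks M (-1) 1 (γ • 1 + M)) =
      (r₁ +ᵥ spectrum K M) ∪ (r₂ +ᵥ spectrum K M) := by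
  ext z
  have hblocks : z • 1 - fromBlocks M (-1) 1 (γ • 1 + M) =
      fromBlocks (z • 1 - M) 1 (-1) ((z - γ) • 1 - M) := by
    rw [← fromBlocks_one, fromBlocks_smul, sub_eq_add_neg, fromBlocks_neg, fromBlocks_add]
    congr 1 <;> module
  have hfactor : 1 + (z • 1 - M) * ((z - γ) • 1 - M) =
      ((z - r₁) • 1 - M) * ((z - r₂) • 1 - M) := by
    subst hsum
    nth_rewrite 1 [← one_smul K (1 : Matrix n n K), ← hprod]
    simp only [mul_sub, sub_mul, smul_mul_assoc, mul_smul_comm, Matrix.mul_one, Matrix.one_mul]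
    match_scalars <;> ring
  simp only [Set.mem_union, Set.mem_vadd_set_iff_neg_vadd_mem, vadd_eq_add, neg_add_eq_sub,
    mem_spectrum_iff_det_eq_zero, hblocks, det_fromBlocks_one_neg_one, hfactor, det_mul,
    mul_eq_zero]

end Matrix

theorem spectrum.smul_eq_smul_of_isAlgClosed {𝕜 A : Type*} [Field 𝕜] [IsAlgClosed 𝕜] [Ring A]
    [Algebra 𝕜 A] [FiniteDimensional 𝕜 A] (k : 𝕜) (a : A) :
    spectrum 𝕜 (k • a) = k • spectrum 𝕜 a := by
  cases subsingleton_or_nontrivial A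
  · simp [spectrum.of_subsingleton]
  · exact spectrum.smul_eq_smul k a (spectrum.nonempty_of_isAlgClosed_of_finiteDimensional 𝕜 a)

theorem stmt2_general {d : ℕ} (J : Matrix (Fin d) (Fin d) ℝ)
    (γ μ : ℝ) (c : ℂ) (hc : c ^ 2 = ((γ : ℂ) / 2) ^ 2 - 1) :
    spectrum ℂ
        ((fromBlocks (μ • J) (-1) 1 (γ • (1 : Matrix (Fin d) (Fin d) ℝ) + μ • J)).map
          (algebraMap ℝ ℂ)) =
      {z : ℂ | ∃ l ∈ spectrum ℂ (J.map (algebraMap ℝ ℂ)), z = (μ : ℂ) * l + (γ : ℂ) / 2 + c} ∪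
      {z : ℂ | ∃ l ∈ spectrum ℂ (J.map (algebraMap ℝ ℂ)), z = (μ : ℂ) * l + (γ : ℂ) / 2 - c} := by
  set N := J.map (algebraMap ℝ ℂ)
  have hB : (fromBlocks (μ • J) (-1) 1 (γ • (1 : Matrix (Fin d) (Fin d) ℝ) + μ • J)).map
      (algebraMap ℝ ℂ) = fromBlocks ((μ : ℂ) • N) (-1) 1 ((γ : ℂ) • 1 + (μ : ℂ) • N) := by
    simp [N, fromBlocks_map, Matrix.map_add, Matrix.map_smul, Matrix.map_neg]
  rw [hB, spectrum_fromBlocks_neg_one_one _ (r₁ := γ / 2 + c) (r₂ := γ / 2 - c) (by ring)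
    (by linear_combination -hc), spectrum.smul_eq_smul_of_isAlgClosed]
  ext z
  simp only [Set.mem_union, Set.mem_vadd_set, Set.mem_smul_set, Set.mem_ofPred_eq, vadd_eq_add,
    smul_eq_mul, exists_exists_and_eq_and]
  refine or_congr (exists_congr fun l ↦ and_congr_right fun _ ↦ ?_)
    (exists_congr fun l ↦ and_congr_right fun _ ↦ ?_) <;>
    exact ⟨fun h ↦ by linear_combination -h, fun h ↦ by linear_combination -h⟩

/-- Spectrum of the drift matrix `B = [[μJ, -I],[I, γI + μJ]]` of the equally
perturbed underdamped Langevin dynamics: it equals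
`{μλ + γ/2 ± c : λ ∈ σ(J)}` where `c² = (γ/2)² - 1`. -/
theorem stmt2 {d : ℕ} (J : Matrix (Fin d) (Fin d) ℝ) (hJ : Jᵀ = -J)
    (γ μ : ℝ) (c : ℂ) (hc : c ^ 2 = ((γ : ℂ) / 2) ^ 2 - 1) :
    spectrum ℂ
        ((fromBlocks (μ • J) (-1) 1 (γ • (1 : Matrix (Fin d) (Fin d) ℝ) + μ • J)).map
          (algebraMap ℝ ℂ)) =
      {z : ℂ | ∃ l ∈ spectrum ℂ (J.map (algebraMap ℝ ℂ)), z = (μ : ℂ) * l + (γ : ℂ) / 2 + c} ∪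
      {z : ℂ | ∃ l ∈ spectrum ℂ (J.map (algebraMap ℝ ℂ)), z = (μ : ℂ) * l + (γ : ℂ) / 2 - c} :=
  stmt2_general J γ μ c hc
end

section
/- Let J be a real antisymmetric d×d matrix, l ∈ ℝᵈ, γ > 0, and set A(μ,ν) = [[−μJ, I],[−I, γI − νJ]] and l̄ = (l, 0) ∈ ℝ^{2d}. Then A(μ,ν) is invertible for all (μ,ν) in some open neighborhood of (0,0); the function Θ(μ,ν) = l̄ · (A(μ,ν)⁻¹ l̄) is twice continuously differentiable near (0,0); its gradient at (0,0) is zero; and its Hessian at (0,0) equals the 2×2 matrix [[−2γ³|Jl|², 2γ|Jl|²],[2γ|Jl|², 0]]. -/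
/-!
Solving `A(μ,ν) (u, v) = (l, 0)` gives `u = G v` with `G = γ - νJ` and `(1 - μ J G) v = l`, so
`Θ = l ⬝ G v`. Substituting `v = l + μ J G l + μ² (J G)² v` and using `l ⬝ J l = l ⬝ J³ l = 0` for
antisymmetric `J` gives `Θ = γ |l|² + 2γ |Jl|² μν + μ² R(μ,ν)` with `R` smooth near the origin and
`R(0) = -γ³ |Jl|²`; the gradient and Hessian at the origin are read off from this form.
-/

open Matrix

theorem eq_one_add_add_mul_mul_of_one_sub_mul_eq_one {S : Type*} [Ring S] {a b : S}
    (h : (1 - a) * b = 1) : b = 1 + a + a * a * b := by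
  have hb : b = 1 + a * b := by rw [← h]; noncomm_ring
  calc b = 1 + a * b := hb
    _ = 1 + a * (1 + a * b) := congrArg (fun t => 1 + a * t) hb
    _ = 1 + a + a * a * b := by noncomm_ring

section BlockInverse
variable {R : Type*} [CommRing R] {n : Type*} [Fintype n] [DecidableEq n]

theorem fromBlocks_mul_fromBlocks_neg_smul_one_one (J G : Matrix n n R) (μ : R) :
    fromBlocks (-(μ • J)) 1 (-1) G * fromBlocks G (-1) 1 0 =
      fromBlocks (1 - μ • (J * G)) (μ • J) 0 1 := by
  simp only [fromBlocks_multiply]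
  congr 1 <;> simp [sub_eq_neg_add]

theorem isUnit_fromBlocks_neg_smul_one_one {J G : Matrix n n R} {μ : R}
    (h : IsUnit (1 - μ • (J * G))) : IsUnit (fromBlocks (-(μ • J)) 1 (-1) G) := by
  have hdet := congrArg det (fromBlocks_mul_fromBlocks_neg_smul_one_one J G μ)
  rw [det_mul, det_fromBlocks_zero₂₁, det_one, mul_one] at hdet
  rw [isUnit_iff_isUnit_det] at h ⊢
  exact isUnit_of_mul_isUnit_left (hdet ▸ h)

theorem inv_fromBlocks_neg_smul_one_one_mulVec {J G : Matrix n n R} {μ : R}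
    (h : IsUnit (1 - μ • (J * G))) (l : n → R) :
    (fromBlocks (-(μ • J)) 1 (-1) G)⁻¹ *ᵥ Sum.elim l 0 =
      Sum.elim (G *ᵥ (1 - μ • (J * G))⁻¹ *ᵥ l) ((1 - μ • (J * G))⁻¹ *ᵥ l) := by
  set N := 1 - μ • (J * G)
  set A := fromBlocks (-(μ • J)) 1 (-1) G
  have hA : A *ᵥ Sum.elim (G *ᵥ N⁻¹ *ᵥ l) (N⁻¹ *ᵥ l) = Sum.elim l 0 := by
    rw [fromBlocks_mulVec]
    simp only [Sum.elim_comp_inl, Sum.elim_comp_inr, mulVec_mulVec, ← add_mulVec]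
    congr 1
    · have hN : -(μ • J) * (G * N⁻¹) + 1 * N⁻¹ = N * N⁻¹ := by
        simp only [N, sub_mul, one_mul, neg_mul, smul_mul_assoc, mul_assoc]
        abel
      rw [hN, mul_nonsing_inv _ ((isUnit_iff_isUnit_det _).mp h), one_mulVec]
    · simp
  rw [← hA, mulVec_mulVec,
    nonsing_inv_mul _ ((isUnit_iff_isUnit_det _).mp (isUnit_fromBlocks_neg_smul_one_one h)),
    one_mulVec]

end BlockInverse

open scoped Matrix.Norms.Operator in
theorem ContDiffAt.dotProduct_mul_inv_mulVec {E : Type*} [NormedAddCommGroup E] [NormedSpace ℝ E]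
    {n : Type*} [Fintype n] [DecidableEq n] {k : WithTop ℕ∞} {f g : E → Matrix n n ℝ} {x : E}
    (hf : ContDiffAt ℝ k f x) (hg : ContDiffAt ℝ k g x) (hgx : IsUnit (g x)) (u w : n → ℝ) :
    ContDiffAt ℝ k (fun y => u ⬝ᵥ (f y * (g y)⁻¹) *ᵥ w) x := by
  let L : Matrix n n ℝ →ₗ[ℝ] ℝ :=
    { toFun := fun M => u ⬝ᵥ M *ᵥ w
      map_add' := fun M N => by simp [add_mulVec, dotProduct_add]
      map_smul' := fun c M => by simp [smul_mulVec, dotProduct_smul] }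
  have hinv : ContDiffAt ℝ k (fun y => (g y)⁻¹) x := by
    simp only [nonsing_inv_eq_ringInverse]
    exact (contDiffAt_ringInverse ℝ hgx.unit).comp x hg
  exact L.toContinuousLinearMap.contDiff.contDiffAt.comp x (hf.mul hinv)

section SquareTimesRemainder
variable {E : Type*} [NormedAddCommGroup E] [NormedSpace ℝ E] (φ ψ : E →L[ℝ] ℝ) (b c : ℝ)
  {T : E → ℝ}

theorem contDiffAt_add_mul_add_mul_self_mul {k : WithTop ℕ∞} {y : E} (hT : ContDiffAt ℝ k T y) :
    ContDiffAt ℝ k (fun x => c + b * (φ x * ψ x) + φ x * φ x * T x) y := by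
  have := φ.contDiff (n := k)
  have := ψ.contDiff (n := k)
  fun_prop

theorem fderiv_add_mul_add_mul_self_mul_apply {y : E} (hT : DifferentiableAt ℝ T y) (w : E) :
    fderiv ℝ (fun x => c + b * (φ x * ψ x) + φ x * φ x * T x) y w =
      b * (φ y * ψ w + ψ y * φ w) + (φ y * φ y * fderiv ℝ T y w + 2 * φ y * φ w * T y) := by
  have h := ((hasFDerivAt_const c y).fun_add
    ((φ.hasFDerivAt.fun_mul ψ.hasFDerivAt).const_mul b)).fun_add
    ((φ.hasFDerivAt.fun_mul φ.hasFDerivAt).fun_mul hT.hasFDerivAt)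
  rw [h.fderiv]
  simp only [_root_.add_apply, FunLike.coe_smul, Pi.smul_apply, _root_.zero_apply, smul_eq_mul]
  ring

theorem fderiv_add_mul_add_mul_self_mul_zero (hT : DifferentiableAt ℝ T 0) :
    fderiv ℝ (fun x => c + b * (φ x * ψ x) + φ x * φ x * T x) 0 = 0 := by
  ext w
  simp [fderiv_add_mul_add_mul_self_mul_apply φ ψ b c hT]

theorem iteratedFDeriv_two_add_mul_add_mul_self_mul_zero (hT : ContDiffAt ℝ 2 T 0) (v w : E) :
    iteratedFDeriv ℝ 2 (fun x => c + b * (φ x * ψ x) + φ x * φ x * T x) 0 ![v, w] =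
      b * (φ v * ψ w + ψ v * φ w) + 2 * T 0 * (φ v * φ w) := by
  set F := fun x => c + b * (φ x * ψ x) + φ x * φ x * T x
  have hdF : DifferentiableAt ℝ (fderiv ℝ F) 0 :=
    ((contDiffAt_add_mul_add_mul_self_mul φ ψ b c hT).fderiv_right (m := 1) le_rfl).differentiableAt
      one_ne_zero
  have hdT : DifferentiableAt ℝ (fderiv ℝ T) 0 :=
    (hT.fderiv_right (m := 1) le_rfl).differentiableAt one_ne_zero
  have hFw : (fun y => fderiv ℝ F y w) =ᶠ[nhds 0] fun y =>
      b * (φ y * ψ w + ψ y * φ w) + (φ y * φ y * fderiv ℝ T y w + 2 * φ y * φ w * T y) := by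
    filter_upwards [hT.eventually (by simp)] with y hy
    exact fderiv_add_mul_add_mul_self_mul_apply φ ψ b c (hy.differentiableAt two_ne_zero) w
  have hderiv := (((φ.hasFDerivAt.mul_const (ψ w)).fun_add
    (ψ.hasFDerivAt.mul_const (φ w))).const_mul b).fun_add
    (((φ.hasFDerivAt.fun_mul φ.hasFDerivAt).fun_mul
      (hdT.clm_apply (differentiableAt_const w)).hasFDerivAt).fun_add
      (((φ.hasFDerivAt.const_mul 2).mul_const (φ w)).fun_mul
        (hT.differentiableAt two_ne_zero).hasFDerivAt))
  have hswap : fderiv ℝ (fderiv ℝ F) 0 v w = fderiv ℝ (fun y => fderiv ℝ F y w) 0 v := by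
    rw [fderiv_clm_apply hdF (differentiableAt_const w)]
    simp
  simp only [iteratedFDeriv_two_apply, Matrix.cons_val_zero, Matrix.cons_val_one]
  rw [hswap, hFw.fderiv_eq, hderiv.fderiv]
  simp only [_root_.add_apply, FunLike.coe_smul, Pi.smul_apply, smul_eq_mul, map_zero]
  ring

end SquareTimesRemainder

section Skew
variable {n : Type*} [Fintype n] {J : Matrix n n ℝ}

theorem dotProduct_mulVec_of_transpose_eq_neg (hJ : Jᵀ = -J) (u w : n → ℝ) :
    u ⬝ᵥ J *ᵥ w = -(J *ᵥ u ⬝ᵥ w) := by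
  rw [dotProduct_mulVec, ← mulVec_transpose, hJ, neg_mulVec, neg_dotProduct]

theorem dotProduct_mulVec_self_of_transpose_eq_neg (hJ : Jᵀ = -J) (u : n → ℝ) :
    u ⬝ᵥ J *ᵥ u = 0 := by
  have h := dotProduct_mulVec_of_transpose_eq_neg hJ u u
  rw [dotProduct_comm (J *ᵥ u)] at h
  linarith

end Skew

namespace PerturbedLangevin
variable {n : Type*} [Fintype n] [DecidableEq n] (J : Matrix n n ℝ) (γ : ℝ) (l : n → ℝ)

def friction (ν : ℝ) : Matrix n n ℝ := γ • 1 - ν • J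

def reduced (x : ℝ × ℝ) : Matrix n n ℝ := 1 - x.1 • (J * friction J γ x.2)

noncomputable def remainder (x : ℝ × ℝ) : ℝ :=
  l ⬝ᵥ (friction J γ x.2 * (J * friction J γ x.2) * (J * friction J γ x.2) *
    (reduced J γ x)⁻¹) *ᵥ l

variable {J}

theorem dotProduct_friction_mulVec (hJ : Jᵀ = -J) (ν : ℝ) :
    l ⬝ᵥ friction J γ ν *ᵥ l = γ * (l ⬝ᵥ l) := by
  simp [friction, sub_mulVec, smul_mulVec, dotProduct_mulVec_self_of_transpose_eq_neg hJ]

theorem dotProduct_friction_mul_friction_mulVec (hJ : Jᵀ = -J) (ν : ℝ) :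
    l ⬝ᵥ (friction J γ ν * (J * friction J γ ν)) *ᵥ l = 2 * γ * ν * (J *ᵥ l ⬝ᵥ J *ᵥ l) := by
  have h1 := dotProduct_mulVec_self_of_transpose_eq_neg hJ l
  have h2 : l ⬝ᵥ J *ᵥ J *ᵥ l = -(J *ᵥ l ⬝ᵥ J *ᵥ l) := dotProduct_mulVec_of_transpose_eq_neg hJ _ _
  have h3 : l ⬝ᵥ J *ᵥ J *ᵥ J *ᵥ l = 0 := by
    rw [dotProduct_mulVec_of_transpose_eq_neg hJ, dotProduct_mulVec_self_of_transpose_eq_neg hJ,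
      neg_zero]
  simp only [friction, mul_sub, sub_mul, mul_smul_comm, smul_mul_assoc, mul_one, one_mul,
    sub_mulVec, smul_mulVec, ← mulVec_mulVec, dotProduct_sub, dotProduct_smul,
    smul_eq_mul, h1, h2, h3]
  ring

theorem remainder_zero (hJ : Jᵀ = -J) : remainder J γ l 0 = -(γ ^ 3 * (J *ᵥ l ⬝ᵥ J *ᵥ l)) := by
  simp only [remainder, reduced, friction, Prod.fst_zero, Prod.snd_zero, zero_smul, sub_zero,
    inv_one, mul_one, mul_smul_comm, smul_mul_assoc, one_mul, smul_mulVec, ← mulVec_mulVec,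
    dotProduct_smul, smul_eq_mul, dotProduct_mulVec_of_transpose_eq_neg hJ l (J *ᵥ l)]
  ring

theorem sumElim_dotProduct_inv_fromBlocks_mulVec (hJ : Jᵀ = -J) {x : ℝ × ℝ}
    (hx : IsUnit (reduced J γ x)) :
    Sum.elim l 0 ⬝ᵥ (fromBlocks (-(x.1 • J)) 1 (-1) (friction J γ x.2))⁻¹ *ᵥ Sum.elim l 0 =
      γ * (l ⬝ᵥ l) + 2 * γ * (J *ᵥ l ⬝ᵥ J *ᵥ l) * (x.1 * x.2) + x.1 * x.1 * remainder J γ l x := by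
  rw [inv_fromBlocks_neg_smul_one_one_mulVec hx, sumElim_dotProduct_sumElim, zero_dotProduct,
    add_zero, mulVec_mulVec]
  have hN : (1 - x.1 • (J * friction J γ x.2)) * (reduced J γ x)⁻¹ = 1 :=
    mul_nonsing_inv _ ((isUnit_iff_isUnit_det _).mp hx)
  change l ⬝ᵥ (friction J γ x.2 * (reduced J γ x)⁻¹) *ᵥ l = _
  rw [eq_one_add_add_mul_mul_of_one_sub_mul_eq_one hN]
  simp only [mul_add, add_mulVec, dotProduct_add, mul_one, mul_smul_comm, smul_mul_assoc,
    smul_smul, mul_assoc, smul_mulVec, dotProduct_smul, smul_eq_mul,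
    dotProduct_friction_mulVec γ l hJ, dotProduct_friction_mul_friction_mulVec γ l hJ, remainder]
  ring

section Smooth
open scoped Matrix.Norms.Operator
variable (J)

theorem continuous_reduced : Continuous (reduced J γ) := by
  unfold reduced friction
  fun_prop

theorem contDiffAt_remainder {k : WithTop ℕ∞} {x : ℝ × ℝ} (hx : IsUnit (reduced J γ x)) :
    ContDiffAt ℝ k (remainder J γ l) x := by
  have hG : ContDiff ℝ k fun y : ℝ × ℝ => friction J γ y.2 := by
    unfold friction
    fun_prop
  have hN : ContDiff ℝ k (reduced J γ) := by
    unfold reduced friction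
    fun_prop
  exact ContDiffAt.dotProduct_mul_inv_mulVec
    ((hG.mul (contDiff_const.mul hG)).mul (contDiff_const.mul hG)).contDiffAt hN.contDiffAt hx l l

theorem isOpen_setOf_isUnit_reduced : IsOpen {x | IsUnit (reduced J γ x)} :=
  Units.isOpen.preimage (continuous_reduced J γ)

end Smooth

end PerturbedLangevin

theorem stmt5_general {d : ℕ} (J : Matrix (Fin d) (Fin d) ℝ) (hJ : Jᵀ = -J)
    (l : Fin d → ℝ) (γ : ℝ)
    (A : ℝ × ℝ → Matrix (Fin d ⊕ Fin d) (Fin d ⊕ Fin d) ℝ)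
    (hA : ∀ x : ℝ × ℝ,
      A x = fromBlocks (-(x.1 • J)) 1 (-1) (γ • (1 : Matrix (Fin d) (Fin d) ℝ) - x.2 • J))
    (lbar : Fin d ⊕ Fin d → ℝ) (hlbar : lbar = Sum.elim l 0)
    (Θ : ℝ × ℝ → ℝ) (hΘ : ∀ x, Θ x = lbar ⬝ᵥ (A x)⁻¹.mulVec lbar) :
    (∃ U : Set (ℝ × ℝ), IsOpen U ∧ ((0 : ℝ), (0 : ℝ)) ∈ U ∧ ∀ x ∈ U, IsUnit (A x)) ∧
    ContDiffAt ℝ 2 Θ (0, 0) ∧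
    fderiv ℝ Θ (0, 0) = 0 ∧
    iteratedFDeriv ℝ 2 Θ (0, 0) ![(1, 0), (1, 0)] =
      -2 * γ ^ 3 * (J.mulVec l ⬝ᵥ J.mulVec l) ∧
    iteratedFDeriv ℝ 2 Θ (0, 0) ![(1, 0), (0, 1)] =
      2 * γ * (J.mulVec l ⬝ᵥ J.mulVec l) ∧
    iteratedFDeriv ℝ 2 Θ (0, 0) ![(0, 1), (1, 0)] =
      2 * γ * (J.mulVec l ⬝ᵥ J.mulVec l) ∧
    iteratedFDeriv ℝ 2 Θ (0, 0) ![(0, 1), (0, 1)] = 0 := by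
  set U := {x : ℝ × ℝ | IsUnit (PerturbedLangevin.reduced J γ x)}
  have h0 : (0 : ℝ × ℝ) ∈ U := by simp [U, PerturbedLangevin.reduced]
  set T := PerturbedLangevin.remainder J γ l
  set fst := ContinuousLinearMap.fst ℝ ℝ ℝ
  set snd := ContinuousLinearMap.snd ℝ ℝ ℝ
  set F := fun x => γ * (l ⬝ᵥ l) + 2 * γ * (J *ᵥ l ⬝ᵥ J *ᵥ l) * (fst x * snd x) +
      fst x * fst x * T x
  have hev : Θ =ᶠ[nhds 0] F := by
    filter_upwards [(PerturbedLangevin.isOpen_setOf_isUnit_reduced J γ).mem_nhds h0] with x hx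
    rw [hΘ, hA, hlbar]
    exact PerturbedLangevin.sumElim_dotProduct_inv_fromBlocks_mulVec γ l hJ hx
  have hT : ContDiffAt ℝ 2 T 0 := PerturbedLangevin.contDiffAt_remainder J γ l h0
  have hT0 : T 0 = -(γ ^ 3 * (J *ᵥ l ⬝ᵥ J *ᵥ l)) := PerturbedLangevin.remainder_zero γ l hJ
  have hess (v w : ℝ × ℝ) : iteratedFDeriv ℝ 2 Θ 0 ![v, w] =
      2 * γ * (J *ᵥ l ⬝ᵥ J *ᵥ l) * (v.1 * w.2 + v.2 * w.1) + 2 * T 0 * (v.1 * w.1) := by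
    rw [(hev.iteratedFDeriv ℝ 2).eq_of_nhds]
    exact iteratedFDeriv_two_add_mul_add_mul_self_mul_zero fst snd _ _ hT v w
  refine ⟨⟨U, PerturbedLangevin.isOpen_setOf_isUnit_reduced J γ, h0, fun x hx =>
      hA x ▸ isUnit_fromBlocks_neg_smul_one_one hx⟩,
    (contDiffAt_add_mul_add_mul_self_mul fst snd _ _ hT).congr_of_eventuallyEq hev,
    hev.fderiv_eq.trans (fderiv_add_mul_add_mul_self_mul_zero fst snd _ _
      (hT.differentiableAt two_ne_zero)), ?_, ?_, ?_, ?_⟩ <;>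
  · rw [← Prod.zero_eq_mk, hess, hT0]
    dsimp only
    ring

/-- Proposition 4.4 (linear observables): with `A(μ,ν) = [[-μJ, I],[-I, γI - νJ]]`
and `l̄ = (l,0)`, the matrix `A` is invertible near `(0,0)`, the asymptotic
variance `Θ(μ,ν) = l̄ · A(μ,ν)⁻¹ l̄` is twice continuously differentiable near
`(0,0)`, its gradient there vanishes, and its Hessian is
`[[-2γ³|Jl|², 2γ|Jl|²],[2γ|Jl|², 0]]`. -/
theorem stmt5 {d : ℕ} (J : Matrix (Fin d) (Fin d) ℝ) (hJ : Jᵀ = -J)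
    (l : Fin d → ℝ) (γ : ℝ) (hγ : 0 < γ)
    (A : ℝ × ℝ → Matrix (Fin d ⊕ Fin d) (Fin d ⊕ Fin d) ℝ)
    (hA : ∀ x : ℝ × ℝ,
      A x = fromBlocks (-(x.1 • J)) 1 (-1) (γ • (1 : Matrix (Fin d) (Fin d) ℝ) - x.2 • J))
    (lbar : Fin d ⊕ Fin d → ℝ) (hlbar : lbar = Sum.elim l 0)
    (Θ : ℝ × ℝ → ℝ) (hΘ : ∀ x, Θ x = lbar ⬝ᵥ (A x)⁻¹.mulVec lbar) :
    (∃ U : Set (ℝ × ℝ), IsOpen U ∧ ((0 : ℝ), (0 : ℝ)) ∈ U ∧ ∀ x ∈ U, IsUnit (A x)) ∧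
    ContDiffAt ℝ 2 Θ (0, 0) ∧
    fderiv ℝ Θ (0, 0) = 0 ∧
    iteratedFDeriv ℝ 2 Θ (0, 0) ![(1, 0), (1, 0)] =
      -2 * γ ^ 3 * (J.mulVec l ⬝ᵥ J.mulVec l) ∧
    iteratedFDeriv ℝ 2 Θ (0, 0) ![(1, 0), (0, 1)] =
      2 * γ * (J.mulVec l ⬝ᵥ J.mulVec l) ∧
    iteratedFDeriv ℝ 2 Θ (0, 0) ![(0, 1), (1, 0)] =
      2 * γ * (J.mulVec l ⬝ᵥ J.mulVec l) ∧
    iteratedFDeriv ℝ 2 Θ (0, 0) ![(0, 1), (0, 1)] = 0 :=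
  stmt5_general J hJ l γ A hA lbar hlbar Θ hΘ
end

section
/- Let V : ℝᵈ → ℝ be twice continuously differentiable, M a real symmetric positive definite d×d matrix, J₁ and J₂ real antisymmetric d×d matrices, and μ, ν ∈ ℝ. Define ρ(q,p) = exp(−V(q) − (1/2)·p·M⁻¹p) and the vector field γ(q,p) = (M⁻¹p − μJ₁∇V(q), −∇V(q) − νJ₂M⁻¹p) on ℝᵈ × ℝᵈ. Then the divergence of ρ·γ vanishes identically: ∇·(ρ γ)(q,p) = 0 for all (q,p) ∈ ℝ^{2d}. -/
/-
Write `H(q,p) = V(q) + p·M⁻¹p/2`, so that `ρ = exp(-H)` and `∇·(ργ) = ρ (∇·γ - γ·∇H)`.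
The divergence of `γ` is `-μ tr(J₁ ∇²V) - ν tr(J₂ M⁻¹)`, and each trace vanishes because it pairs
an antisymmetric matrix with a symmetric one (the Hessian by Schwarz's theorem). In
`γ·∇H = (M⁻¹p - μJ₁∇V)·∇V + (-∇V - νJ₂M⁻¹p)·M⁻¹p` the Hamiltonian terms `±M⁻¹p·∇V` cancel and
the quadratic forms of the antisymmetric `J₁`, `J₂` vanish.
-/

open Matrix

/-- The gradient of `V : ℝᵈ → ℝ` at `q`, as a vector. -/
noncomputable def gradV {d : ℕ} (V : (Fin d → ℝ) → ℝ) (q : Fin d → ℝ) : Fin d → ℝ :=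
  fun i => fderiv ℝ V q (Pi.single i 1)

namespace Matrix

variable {n R : Type*} [Fintype n]

theorem trace_eq_sum_mulVec_single [NonAssocSemiring R] [DecidableEq n] (B : Matrix n n R) :
    B.trace = ∑ i, (B *ᵥ Pi.single i 1) i := by
  simp [trace]

variable [CommRing R] [IsAddTorsionFree R]

theorem trace_mul_eq_zero_of_transpose_eq_neg {B S : Matrix n n R} (hB : Bᵀ = -B)
    (hS : S.IsSymm) : (B * S).trace = 0 :=
  self_eq_neg.mp <| calc
    (B * S).trace = (B * S)ᵀ.trace := (trace_transpose _).symm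
    _ = -(B * S).trace := by rw [transpose_mul, hB, hS.eq, mul_neg, trace_neg, trace_mul_comm]

theorem dotProduct_mulVec_self_eq_zero_of_transpose_eq_neg {B : Matrix n n R} (hB : Bᵀ = -B)
    (v : n → R) : v ⬝ᵥ B *ᵥ v = 0 :=
  self_eq_neg.mp <| calc
    v ⬝ᵥ B *ᵥ v = Bᵀ *ᵥ v ⬝ᵥ v := by rw [dotProduct_mulVec, mulVec_transpose]
    _ = -(v ⬝ᵥ B *ᵥ v) := by rw [hB, neg_mulVec, neg_dotProduct, dotProduct_comm]

end Matrix

section VectorCalculus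

variable {𝕜 X : Type*} [NontriviallyNormedField 𝕜] [NormedAddCommGroup X] [NormedSpace 𝕜 X]
  {m n : Type*} [Fintype m] [Fintype n] {f g : X → n → 𝕜} {x : X}

@[fun_prop]
theorem DifferentiableAt.dotProduct (hf : DifferentiableAt 𝕜 f x) (hg : DifferentiableAt 𝕜 g x) :
    DifferentiableAt 𝕜 (fun y => f y ⬝ᵥ g y) x := by
  unfold _root_.dotProduct
  fun_prop

@[fun_prop]
theorem Differentiable.dotProduct (hf : Differentiable 𝕜 f) (hg : Differentiable 𝕜 g) :
    Differentiable 𝕜 (fun y => f y ⬝ᵥ g y) :=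
  fun x => (hf x).dotProduct (hg x)

theorem fderiv_dotProduct_apply (hf : DifferentiableAt 𝕜 f x) (hg : DifferentiableAt 𝕜 g x)
    (v : X) :
    fderiv 𝕜 (fun y => f y ⬝ᵥ g y) x v = fderiv 𝕜 f x v ⬝ᵥ g x + f x ⬝ᵥ fderiv 𝕜 g x v := by
  have hsum := HasFDerivAt.fun_sum (u := Finset.univ) fun i _ =>
    (hasFDerivAt_pi'.1 hf.hasFDerivAt i).fun_mul (hasFDerivAt_pi'.1 hg.hasFDerivAt i)
  simp only [dotProduct, hsum.fderiv]
  simp [Finset.sum_add_distrib, mul_comm, add_comm]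

theorem fderiv_comp_fst_apply {Y Z : Type*} [NormedAddCommGroup Y] [NormedSpace 𝕜 Y]
    [NormedAddCommGroup Z] [NormedSpace 𝕜 Z] {h : X → Z} {x : X × Y}
    (hh : DifferentiableAt 𝕜 h x.1) (v : X) (w : Y) :
    fderiv 𝕜 (fun y => h y.1) x (v, w) = fderiv 𝕜 h x.1 v :=
  congrArg (· (v, w)) (hh.hasFDerivAt.comp x hasFDerivAt_fst).fderiv

variable [CompleteSpace 𝕜]

theorem HasFDerivAt.matrix_mulVec {f' : X →L[𝕜] n → 𝕜} (A : Matrix m n 𝕜)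
    (hf : HasFDerivAt f f' x) :
    HasFDerivAt (fun y => A *ᵥ f y) ((LinearMap.toContinuousLinearMap A.mulVecLin).comp f') x :=
  (LinearMap.toContinuousLinearMap A.mulVecLin).hasFDerivAt.comp x hf

@[fun_prop]
theorem DifferentiableAt.matrix_mulVec (A : Matrix m n 𝕜) (hf : DifferentiableAt 𝕜 f x) :
    DifferentiableAt 𝕜 (fun y => A *ᵥ f y) x :=
  (hf.hasFDerivAt.matrix_mulVec A).differentiableAt

@[fun_prop]
theorem Differentiable.matrix_mulVec (A : Matrix m n 𝕜) (hf : Differentiable 𝕜 f) :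
    Differentiable 𝕜 (fun y => A *ᵥ f y) :=
  fun x => (hf x).matrix_mulVec A

theorem fderiv_matrix_mulVec_apply (A : Matrix m n 𝕜) (hf : DifferentiableAt 𝕜 f x) (v : X) :
    fderiv 𝕜 (fun y => A *ᵥ f y) x v = A *ᵥ fderiv 𝕜 f x v := by
  simp [(hf.hasFDerivAt.matrix_mulVec A).fderiv]

end VectorCalculus

section Hessian

variable {d : ℕ} {V : (Fin d → ℝ) → ℝ}

noncomputable def hessian (V : (Fin d → ℝ) → ℝ) (q : Fin d → ℝ) : Matrix (Fin d) (Fin d) ℝ :=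
  LinearMap.toMatrix' (fderiv ℝ (gradV V) q : (Fin d → ℝ) →ₗ[ℝ] Fin d → ℝ)

theorem differentiable_gradV (hV : ContDiff ℝ 2 V) : Differentiable ℝ (gradV V) := by
  have := (hV.fderiv_right (m := 1) (by norm_num)).differentiable one_ne_zero
  unfold gradV
  fun_prop

theorem fderiv_gradV_apply (hV : ContDiff ℝ 2 V) (q v : Fin d → ℝ) (k : Fin d) :
    fderiv ℝ (gradV V) q v k = fderiv ℝ (fderiv ℝ V) q v (Pi.single k 1) := by
  have hd : Differentiable ℝ (fderiv ℝ V) :=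
    (hV.fderiv_right (m := 1) (by norm_num)).differentiable one_ne_zero
  unfold gradV
  rw [fderiv_pi fun i => (hd _).clm_apply (differentiableAt_const _)]
  simp [fderiv_clm_apply (hd _) (differentiableAt_const _)]

theorem hessian_mulVec (q v : Fin d → ℝ) : hessian V q *ᵥ v = fderiv ℝ (gradV V) q v :=
  LinearMap.toMatrix'_mulVec _ v

theorem isSymm_hessian (hV : ContDiff ℝ 2 V) (q : Fin d → ℝ) : (hessian V q).IsSymm := by
  ext i k
  have hsym := (hV.contDiffAt (x := q)).isSymmSndFDerivAt (by simp)
  simp [hessian, LinearMap.toMatrix'_apply, fderiv_gradV_apply hV, hsym (Pi.single i 1)]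

end Hessian

section Langevin

abbrev PhaseSpace (d : ℕ) : Type := (Fin d → ℝ) × (Fin d → ℝ)

variable {d : ℕ}

noncomputable def divergence (G : PhaseSpace d → PhaseSpace d) (x : PhaseSpace d) : ℝ :=
  ∑ i, (fderiv ℝ G x (Pi.single i 1, 0)).1 i + ∑ i, (fderiv ℝ G x (0, Pi.single i 1)).2 i

noncomputable def gibbsDensity (V : (Fin d → ℝ) → ℝ) (A : Matrix (Fin d) (Fin d) ℝ)
    (x : PhaseSpace d) : ℝ :=
  Real.exp (-V x.1 - (1 / 2) * (x.2 ⬝ᵥ A *ᵥ x.2))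

noncomputable def langevinDrift (V : (Fin d → ℝ) → ℝ) (A J₁ J₂ : Matrix (Fin d) (Fin d) ℝ)
    (μ ν : ℝ) (x : PhaseSpace d) : PhaseSpace d :=
  (A *ᵥ x.2 - μ • J₁ *ᵥ gradV V x.1, -gradV V x.1 - ν • J₂ *ᵥ A *ᵥ x.2)

variable {V : (Fin d → ℝ) → ℝ} {A J₁ J₂ : Matrix (Fin d) (Fin d) ℝ} {μ ν : ℝ}
  {ρ : PhaseSpace d → ℝ} {G : PhaseSpace d → PhaseSpace d} {x : PhaseSpace d}

theorem divergence_eq_sum_fderiv_apply (hG : DifferentiableAt ℝ G x) :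
    divergence G x = ∑ i, fderiv ℝ (fun y => (G y).1 i) x (Pi.single i 1, 0) +
      ∑ i, fderiv ℝ (fun y => (G y).2 i) x (0, Pi.single i 1) := by
  simp [divergence, (hasFDerivAt_pi'.1 hG.hasFDerivAt.fst _).fderiv,
    (hasFDerivAt_pi'.1 hG.hasFDerivAt.snd _).fderiv]

theorem divergence_smul (hρ : DifferentiableAt ℝ ρ x) (hG : DifferentiableAt ℝ G x) :
    divergence (fun y => ρ y • G y) x = ρ x * divergence G x +
      (G x).1 ⬝ᵥ (fun i => fderiv ℝ ρ x (Pi.single i 1, 0)) +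
      (G x).2 ⬝ᵥ (fun i => fderiv ℝ ρ x (0, Pi.single i 1)) := by
  rw [divergence, divergence, mul_add, Finset.mul_sum, Finset.mul_sum, fderiv_fun_smul hρ hG]
  simp only [_root_.add_apply, _root_.smul_apply, ContinuousLinearMap.smulRight_apply,
    Prod.fst_add, Prod.snd_add, Prod.smul_fst, Prod.smul_snd, Pi.add_apply, Pi.smul_apply,
    smul_eq_mul, Finset.sum_add_distrib, dotProduct]
  simp only [mul_comm]
  ring

theorem differentiable_gibbsDensity (hV : Differentiable ℝ V) :
    Differentiable ℝ (gibbsDensity V A) := by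
  unfold gibbsDensity
  fun_prop

theorem fderiv_gibbsDensity_apply (hV : Differentiable ℝ V) (hA : A.IsSymm) (x : PhaseSpace d)
    (v w : Fin d → ℝ) : fderiv ℝ (gibbsDensity V A) x (v, w) =
      -gibbsDensity V A x * (fderiv ℝ V x.1 v + A *ᵥ x.2 ⬝ᵥ w) := by
  have hQ : fderiv ℝ (fun y : PhaseSpace d => y.2 ⬝ᵥ A *ᵥ y.2) x (v, w) =
      2 * (A *ᵥ x.2 ⬝ᵥ w) := by
    rw [fderiv_dotProduct_apply (by fun_prop) (by fun_prop),
      fderiv_matrix_mulVec_apply _ (by fun_prop), fderiv_snd]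
    simp only [ContinuousLinearMap.coe_snd', dotProduct_mulVec, ← mulVec_transpose, hA.eq,
      dotProduct_comm w]
    ring
  unfold gibbsDensity
  rw [fderiv_exp (by fun_prop)]
  simp (disch := fun_prop) only [fderiv_fun_sub, fderiv_fun_neg, fderiv_const_mul]
  simp only [_root_.smul_apply, _root_.sub_apply, _root_.neg_apply, fderiv_comp_fst_apply (hV _),
    hQ, smul_eq_mul]
  ring

theorem differentiable_langevinDrift (hV : ContDiff ℝ 2 V) :
    Differentiable ℝ (langevinDrift V A J₁ J₂ μ ν) := by
  have := differentiable_gradV hV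
  unfold langevinDrift
  fun_prop

theorem fderiv_langevinDrift_apply (hV : ContDiff ℝ 2 V) (x : PhaseSpace d) (v w : Fin d → ℝ) :
    fderiv ℝ (langevinDrift V A J₁ J₂ μ ν) x (v, w) =
      (A *ᵥ w - μ • J₁ *ᵥ hessian V x.1 *ᵥ v, -(hessian V x.1 *ᵥ v) - ν • J₂ *ᵥ A *ᵥ w) := by
  have hq := (differentiable_gradV hV x.1).hasFDerivAt.comp x hasFDerivAt_fst
  have hp := hasFDerivAt_snd (𝕜 := ℝ) (p := x)
  have h₁ := (hp.matrix_mulVec A).sub ((hq.matrix_mulVec J₁).const_smul μ)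
  have h₂ := hq.neg.sub (((hp.matrix_mulVec A).matrix_mulVec J₂).const_smul ν)
  have hF : HasFDerivAt (langevinDrift V A J₁ J₂ μ ν) _ x := h₁.prodMk h₂
  rw [hF.fderiv]
  simp [hessian_mulVec]

theorem divergence_langevinDrift (hV : ContDiff ℝ 2 V) (hA : A.IsSymm) (hJ₁ : J₁ᵀ = -J₁)
    (hJ₂ : J₂ᵀ = -J₂) (x : PhaseSpace d) : divergence (langevinDrift V A J₁ J₂ μ ν) x = 0 := by
  have hH := trace_mul_eq_zero_of_transpose_eq_neg hJ₁ (isSymm_hessian hV x.1)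
  have hA' := trace_mul_eq_zero_of_transpose_eq_neg hJ₂ hA
  simp only [divergence, fderiv_langevinDrift_apply hV, mulVec_zero, smul_zero, sub_zero,
    neg_zero, zero_sub, Pi.neg_apply, Pi.smul_apply, smul_eq_mul, mulVec_mulVec,
    Finset.sum_neg_distrib, ← Finset.mul_sum, ← trace_eq_sum_mulVec_single, hH, hA']
  simp

theorem langevinDrift_dotProduct_gradient_eq_zero (hJ₁ : J₁ᵀ = -J₁) (hJ₂ : J₂ᵀ = -J₂)
    (x : PhaseSpace d) :
    (langevinDrift V A J₁ J₂ μ ν x).1 ⬝ᵥ gradV V x.1 +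
      (langevinDrift V A J₁ J₂ μ ν x).2 ⬝ᵥ A *ᵥ x.2 = 0 := by
  simp only [langevinDrift, sub_dotProduct, neg_dotProduct, smul_dotProduct,
    dotProduct_comm (J₁ *ᵥ _), dotProduct_comm (J₂ *ᵥ _),
    dotProduct_mulVec_self_eq_zero_of_transpose_eq_neg hJ₁,
    dotProduct_mulVec_self_eq_zero_of_transpose_eq_neg hJ₂, dotProduct_comm (gradV V x.1)]
  ring

theorem divergence_gibbsDensity_smul_langevinDrift (hV : ContDiff ℝ 2 V) (hA : A.IsSymm)
    (hJ₁ : J₁ᵀ = -J₁) (hJ₂ : J₂ᵀ = -J₂) (x : PhaseSpace d) :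
    divergence (fun y => gibbsDensity V A y • langevinDrift V A J₁ J₂ μ ν y) x = 0 := by
  have hV₁ : Differentiable ℝ V := hV.differentiable two_ne_zero
  have hq : (fun i => fderiv ℝ (gibbsDensity V A) x (Pi.single i 1, 0)) =
      -gibbsDensity V A x • gradV V x.1 := by
    ext i
    simp [fderiv_gibbsDensity_apply hV₁ hA, gradV]
  have hp : (fun i => fderiv ℝ (gibbsDensity V A) x (0, Pi.single i 1)) =
      -gibbsDensity V A x • A *ᵥ x.2 := by
    ext i
    simp [fderiv_gibbsDensity_apply hV₁ hA]
  rw [divergence_smul (differentiable_gibbsDensity hV₁ x) (differentiable_langevinDrift hV x),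
    divergence_langevinDrift hV hA hJ₁ hJ₂, hq, hp, dotProduct_smul, dotProduct_smul,
    smul_eq_mul, smul_eq_mul]
  linear_combination (-gibbsDensity V A x) * langevinDrift_dotProduct_gradient_eq_zero hJ₁ hJ₂ x

end Langevin

/-- The invariance condition for the perturbed underdamped Langevin dynamics:
with `ρ(q,p) = exp(-V(q) - p·M⁻¹p/2)` and the vector field
`γ(q,p) = (M⁻¹p - μJ₁∇V(q), -∇V(q) - νJ₂M⁻¹p)`, the divergence of `ρ·γ`
vanishes identically on `ℝᵈ × ℝᵈ`. -/
theorem stmt9 {d : ℕ} (V : (Fin d → ℝ) → ℝ) (hV : ContDiff ℝ 2 V)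
    (M J₁ J₂ : Matrix (Fin d) (Fin d) ℝ) (hM : M.PosDef)
    (hJ₁ : J₁ᵀ = -J₁) (hJ₂ : J₂ᵀ = -J₂) (μ ν : ℝ)
    (ρ : (Fin d → ℝ) × (Fin d → ℝ) → ℝ)
    (hρ : ∀ x, ρ x = Real.exp (-V x.1 - (1 / 2) * (x.2 ⬝ᵥ M⁻¹.mulVec x.2)))
    (F : (Fin d → ℝ) × (Fin d → ℝ) → (Fin d → ℝ) × (Fin d → ℝ))
    (hF : ∀ x, F x = (M⁻¹.mulVec x.2 - μ • J₁.mulVec (gradV V x.1),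
                      -(gradV V x.1) - ν • J₂.mulVec (M⁻¹.mulVec x.2))) :
    ∀ x : (Fin d → ℝ) × (Fin d → ℝ),
      (∑ i, fderiv ℝ (fun y => ρ y * (F y).1 i) x (Pi.single i 1, 0)) +
      (∑ i, fderiv ℝ (fun y => ρ y * (F y).2 i) x (0, Pi.single i 1)) = 0 := by
  intro x
  obtain rfl : ρ = gibbsDensity V M⁻¹ := funext hρ
  obtain rfl : F = langevinDrift V M⁻¹ J₁ J₂ μ ν := funext hF
  have hG : DifferentiableAt ℝ
      (fun y => gibbsDensity V M⁻¹ y • langevinDrift V M⁻¹ J₁ J₂ μ ν y) x :=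
    (differentiable_gibbsDensity (hV.differentiable two_ne_zero) x).smul
      (differentiable_langevinDrift hV x)
  exact (divergence_eq_sum_fderiv_apply hG).symm.trans
    (divergence_gibbsDensity_smul_langevinDrift hV (isHermitian_iff_isSymm.mp hM.1).inv hJ₁ hJ₂ x)
end

section
/- Let J be a real antisymmetric d×d matrix and γ ∈ ℝ. Define on smooth functions φ : ℝᵈ × ℝᵈ → ℝ the operators (L₀φ)(q,p) = p·∇_q φ − q·∇_p φ + γ(−p·∇_p φ + Δ_p φ) and (Aφ)(q,p) = −(Jq)·∇_q φ − (Jp)·∇_p φ. Then L₀ and A commute: for every smooth φ, L₀(Aφ) = A(L₀φ) pointwise on ℝ^{2d}. -/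
open Matrix

namespace Stmt12Aux
variable {d : ℕ}

noncomputable def e1 (d : ℕ) (i : Fin d) : (Fin d → ℝ) × (Fin d → ℝ) := (Pi.single i 1, 0)
noncomputable def e2 (d : ℕ) (i : Fin d) : (Fin d → ℝ) × (Fin d → ℝ) := (0, Pi.single i 1)

lemma pair_eq_sum (v w : Fin d → ℝ) :
    ((v, w) : (Fin d → ℝ) × (Fin d → ℝ)) = ∑ i, v i • e1 d i + ∑ i, w i • e2 d i := by
  ext j
  · simp [e1, e2, Prod.fst_sum, Prod.snd_sum, Finset.sum_apply, Pi.single_apply, mul_ite]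
  · simp [e1, e2, Prod.fst_sum, Prod.snd_sum, Finset.sum_apply, Pi.single_apply, mul_ite]

lemma clm_apply_pair {G : Type*} [NormedAddCommGroup G] [NormedSpace ℝ G]
    (f : ((Fin d → ℝ) × (Fin d → ℝ)) →L[ℝ] G) (v w : Fin d → ℝ) :
    f (v, w) = ∑ i, v i • f (e1 d i) + ∑ i, w i • f (e2 d i) := by
  rw [pair_eq_sum]
  simp [map_add, map_sum, _root_.map_smul]

lemma clm_dot (f : ((Fin d → ℝ) × (Fin d → ℝ)) →L[ℝ] ℝ) (v w : Fin d → ℝ) :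
    f (v, w) = (v ⬝ᵥ fun i => f (e1 d i)) + (w ⬝ᵥ fun i => f (e2 d i)) := by
  rw [clm_apply_pair]
  simp [dotProduct, smul_eq_mul]

variable {d : ℕ}

noncomputable def TT (J : Matrix (Fin d) (Fin d) ℝ) :
    ((Fin d → ℝ) × (Fin d → ℝ)) →L[ℝ] ((Fin d → ℝ) × (Fin d → ℝ)) :=
  LinearMap.toContinuousLinearMap (J.mulVecLin.prodMap J.mulVecLin)

noncomputable def SS (d : ℕ) (γ : ℝ) :
    ((Fin d → ℝ) × (Fin d → ℝ)) →L[ℝ] ((Fin d → ℝ) × (Fin d → ℝ)) :=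
  LinearMap.toContinuousLinearMap
    ((LinearMap.snd ℝ (Fin d → ℝ) (Fin d → ℝ)).prod
      (-(LinearMap.fst ℝ (Fin d → ℝ) (Fin d → ℝ)) - γ • LinearMap.snd ℝ (Fin d → ℝ) (Fin d → ℝ)))

lemma TT_apply (J : Matrix (Fin d) (Fin d) ℝ) (x : (Fin d → ℝ) × (Fin d → ℝ)) :
    TT J x = (J.mulVec x.1, J.mulVec x.2) := rfl

lemma SS_apply (γ : ℝ) (x : (Fin d → ℝ) × (Fin d → ℝ)) :
    SS d γ x = (x.2, -x.1 - γ • x.2) := rfl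

lemma TT_SS_comm (J : Matrix (Fin d) (Fin d) ℝ) (γ : ℝ) (x : (Fin d → ℝ) × (Fin d → ℝ)) :
    TT J (SS d γ x) = SS d γ (TT J x) := by
  simp [TT_apply, SS_apply, Matrix.mulVec_sub, Matrix.mulVec_neg, Matrix.mulVec_smul]

section fd
variable {G : Type*} [NormedAddCommGroup G] [NormedSpace ℝ G]
  {f : (Fin d → ℝ) × (Fin d → ℝ) → ((Fin d → ℝ) × (Fin d → ℝ)) →L[ℝ] G}
  {x : (Fin d → ℝ) × (Fin d → ℝ)}

lemma fderiv_apply_const (hf : DifferentiableAt ℝ f x) (w v : (Fin d → ℝ) × (Fin d → ℝ)) :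
    fderiv ℝ (fun y => f y w) x v = fderiv ℝ f x v w := by
  rw [fderiv_clm_apply hf (differentiableAt_const w)]
  simp

lemma fderiv_apply_clm (hf : DifferentiableAt ℝ f x)
    (B : ((Fin d → ℝ) × (Fin d → ℝ)) →L[ℝ] ((Fin d → ℝ) × (Fin d → ℝ)))
    (v : (Fin d → ℝ) × (Fin d → ℝ)) :
    fderiv ℝ (fun y => f y (B y)) x v = fderiv ℝ f x v (B x) + f x (B v) := by
  rw [fderiv_clm_apply hf B.differentiableAt]
  simp [B.fderiv, add_comm]

end fd

lemma fderiv_apply_const2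
    {f : (Fin d → ℝ) × (Fin d → ℝ) → ((Fin d → ℝ) × (Fin d → ℝ)) →L[ℝ] ((Fin d → ℝ) × (Fin d → ℝ)) →L[ℝ] ℝ}
    (hf : Differentiable ℝ f) (x w w' v : (Fin d → ℝ) × (Fin d → ℝ)) :
    fderiv ℝ (fun y => f y w w') x v = fderiv ℝ f x v w w' := by
  have h1 : (fun y => f y w w') = fun y => (fun z => f z w) y w' := rfl
  rw [h1, fderiv_apply_const ((hf.clm_apply (differentiable_const w)) x) w' v,
    fderiv_apply_const (hf x) w v]


section Sym
variable {φ : (Fin d → ℝ) × (Fin d → ℝ) → ℝ} (hφ : ContDiff ℝ (⊤ : ℕ∞) φ)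

lemma d1 (hφ : ContDiff ℝ (⊤ : ℕ∞) φ) : Differentiable ℝ (fderiv ℝ φ) :=
  (hφ.fderiv_right (m := (⊤ : ℕ∞)) (by simp)).differentiable (by simp)

lemma d2 (hφ : ContDiff ℝ (⊤ : ℕ∞) φ) : Differentiable ℝ (fderiv ℝ (fderiv ℝ φ)) :=
  ((hφ.fderiv_right (m := (⊤ : ℕ∞)) (by simp)).fderiv_right (m := (⊤ : ℕ∞)) (by simp)).differentiable (by simp)

lemma sym2 (hφ : ContDiff ℝ (⊤ : ℕ∞) φ) (x u v : (Fin d → ℝ) × (Fin d → ℝ)) :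
    fderiv ℝ (fderiv ℝ φ) x u v = fderiv ℝ (fderiv ℝ φ) x v u :=
  (hφ.contDiffAt.isSymmSndFDerivAt (by norm_num; exact WithTop.coe_le_coe.mpr (le_top : (2:ℕ∞) ≤ ⊤))).eq u v

lemma sym3_12 (hφ : ContDiff ℝ (⊤ : ℕ∞) φ) (x u v : (Fin d → ℝ) × (Fin d → ℝ)) :
    fderiv ℝ (fderiv ℝ (fderiv ℝ φ)) x u v = fderiv ℝ (fderiv ℝ (fderiv ℝ φ)) x v u :=
  (((hφ.fderiv_right (m := (⊤ : ℕ∞)) (by simp)).contDiffAt).isSymmSndFDerivAt (n := (⊤ : ℕ∞)) (by norm_num; exact WithTop.coe_le_coe.mpr (le_top : (2:ℕ∞) ≤ ⊤))).eq u v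

lemma sym3_23 (hφ : ContDiff ℝ (⊤ : ℕ∞) φ) (x u v w : (Fin d → ℝ) × (Fin d → ℝ)) :
    fderiv ℝ (fderiv ℝ (fderiv ℝ φ)) x u v w = fderiv ℝ (fderiv ℝ (fderiv ℝ φ)) x u w v := by
  have h1 := fderiv_apply_const2 (d2 hφ) x v w u
  have h2 := fderiv_apply_const2 (d2 hφ) x w v u
  have hfun : (fun y => fderiv ℝ (fderiv ℝ φ) y v w) = fun y => fderiv ℝ (fderiv ℝ φ) y w v :=
    funext fun y => sym2 hφ y v w
  rw [← h1, ← h2, hfun]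

end Sym
end Stmt12Aux

open Stmt12Aux

/-- Lemma 4.7(c): the generator `L₀` of the unperturbed underdamped Langevin
dynamics with standard Gaussian target and the perturbation generator
`(Aφ)(q,p) = -(Jq)·∇_q φ - (Jp)·∇_p φ` commute on smooth functions. -/
theorem stmt12 {d : ℕ} (J : Matrix (Fin d) (Fin d) ℝ) (hJ : Jᵀ = -J) (γ : ℝ)
    (L₀ A : ((Fin d → ℝ) × (Fin d → ℝ) → ℝ) → ((Fin d → ℝ) × (Fin d → ℝ) → ℝ))
    (hL₀ : ∀ φ x, L₀ φ x =
      (x.2 ⬝ᵥ fun i => fderiv ℝ φ x (Pi.single i 1, 0))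
      - (x.1 ⬝ᵥ fun i => fderiv ℝ φ x (0, Pi.single i 1))
      + γ * (-(x.2 ⬝ᵥ fun i => fderiv ℝ φ x (0, Pi.single i 1))
          + ∑ i, fderiv ℝ (fun y => fderiv ℝ φ y (0, Pi.single i 1)) x (0, Pi.single i 1)))
    (hA : ∀ φ x, A φ x =
      -(J.mulVec x.1 ⬝ᵥ fun i => fderiv ℝ φ x (Pi.single i 1, 0))
      - (J.mulVec x.2 ⬝ᵥ fun i => fderiv ℝ φ x (0, Pi.single i 1)))
    (φ : (Fin d → ℝ) × (Fin d → ℝ) → ℝ) (hφ : ContDiff ℝ (⊤ : ℕ∞) φ) :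
    ∀ x, L₀ (A φ) x = A (L₀ φ) x := by
  -- generic rewriting of the operators
  have hAeq : ∀ ψ x, A ψ x = -(fderiv ℝ ψ x (TT J x)) := by
    intro ψ x
    have h := clm_dot (fderiv ℝ ψ x) (J.mulVec x.1) (J.mulVec x.2)
    rw [hA, TT_apply, h]
    simp only [e1, e2]
    ring
  have hL₀eq : ∀ ψ x, L₀ ψ x = fderiv ℝ ψ x (SS d γ x)
      + γ * ∑ i, fderiv ℝ (fun y => fderiv ℝ ψ y (e2 d i)) x (e2 d i) := by
    intro ψ x
    have h := clm_dot (fderiv ℝ ψ x) x.2 (-x.1 - γ • x.2)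
    rw [hL₀, SS_apply, h]
    simp only [e1, e2, sub_dotProduct, neg_dotProduct, smul_dotProduct, smul_eq_mul]
    ring
  have hd1 : Differentiable ℝ (fderiv ℝ φ) := d1 hφ
  have hd2 : Differentiable ℝ (fderiv ℝ (fderiv ℝ φ)) := d2 hφ
  -- A φ as a function
  have hAφ : A φ = fun y => -(fderiv ℝ φ y (TT J y)) := funext fun y => hAeq φ y
  -- derivative of A φ
  have dAφ : ∀ y v, fderiv ℝ (A φ) y v
      = -(fderiv ℝ (fderiv ℝ φ) y v (TT J y) + fderiv ℝ φ y (TT J v)) := by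
    intro y v
    rw [hAφ, fderiv_fun_neg]
    simp only [ContinuousLinearMap.neg_apply, neg_inj]
    rw [fderiv_apply_clm (hd1 y) (TT J) v]
  -- L₀ φ as a function
  have hL₀φ : L₀ φ = fun y => fderiv ℝ φ y (SS d γ y)
      + γ * ∑ i, fderiv ℝ (fderiv ℝ φ) y (e2 d i) (e2 d i) := by
    funext y
    rw [hL₀eq φ y]
    congr 2
    exact Finset.sum_congr rfl fun i _ => fderiv_apply_const (hd1 y) (e2 d i) (e2 d i)
  intro x
  rw [hL₀eq (A φ) x, hAeq (L₀ φ) x]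
  -- compute the Laplacian part of the LHS
  have hLapL : ∀ i : Fin d, fderiv ℝ (fun y => fderiv ℝ (A φ) y (e2 d i)) x (e2 d i)
      = -(fderiv ℝ (fderiv ℝ (fderiv ℝ φ)) x (e2 d i) (e2 d i) (TT J x)
          + (fderiv ℝ (fderiv ℝ φ) x (e2 d i) (TT J (e2 d i))
            + fderiv ℝ (fderiv ℝ φ) x (e2 d i) (TT J (e2 d i)))) := by
    intro i
    have hfun : (fun y => fderiv ℝ (A φ) y (e2 d i))
        = fun y => -(fderiv ℝ (fderiv ℝ φ) y (e2 d i) (TT J y) + fderiv ℝ φ y (TT J (e2 d i))) :=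
      funext fun y => dAφ y (e2 d i)
    have hg1 : Differentiable ℝ (fun y => fderiv ℝ (fderiv ℝ φ) y (e2 d i) (TT J y)) :=
      (hd2.clm_apply (differentiable_const _)).clm_apply (TT J).differentiable
    have hg2 : Differentiable ℝ (fun y => fderiv ℝ φ y (TT J (e2 d i))) :=
      hd1.clm_apply (differentiable_const _)
    rw [hfun, fderiv_fun_neg]
    simp only [ContinuousLinearMap.neg_apply, neg_inj]
    rw [fderiv_fun_add (hg1 x) (hg2 x)]
    simp only [ContinuousLinearMap.add_apply]
    rw [fderiv_apply_clm ((hd2.clm_apply (differentiable_const _)) x) (TT J) (e2 d i),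
      fderiv_apply_const (hd2 x) (e2 d i) (e2 d i),
      fderiv_apply_const (hd1 x) (TT J (e2 d i)) (e2 d i)]
    ring
  -- compute the derivative of L₀ φ in direction TT J x
  have hdL₀ : fderiv ℝ (L₀ φ) x (TT J x)
      = fderiv ℝ (fderiv ℝ φ) x (TT J x) (SS d γ x) + fderiv ℝ φ x (SS d γ (TT J x))
        + γ * ∑ i, fderiv ℝ (fderiv ℝ (fderiv ℝ φ)) x (TT J x) (e2 d i) (e2 d i) := by
    have ha : Differentiable ℝ (fun y => fderiv ℝ φ y (SS d γ y)) :=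
      hd1.clm_apply (SS d γ).differentiable
    have hbi : ∀ i : Fin d, Differentiable ℝ
        (fun y => fderiv ℝ (fderiv ℝ φ) y (e2 d i) (e2 d i)) := fun i =>
      (hd2.clm_apply (differentiable_const _)).clm_apply (differentiable_const _)
    have hb : Differentiable ℝ (fun y => γ * ∑ i, fderiv ℝ (fderiv ℝ φ) y (e2 d i) (e2 d i)) :=
      (Differentiable.fun_sum fun i _ => hbi i).const_mul γ
    rw [hL₀φ, fderiv_fun_add (ha x) (hb x)]
    simp only [ContinuousLinearMap.add_apply]
    rw [fderiv_apply_clm (hd1 x) (SS d γ) (TT J x),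
      fderiv_const_mul ((Differentiable.fun_sum fun i _ => hbi i) x) γ]
    simp only [ContinuousLinearMap.smul_apply, smul_eq_mul]
    rw [fderiv_fun_sum fun i _ => hbi i x]
    simp only [ContinuousLinearMap.sum_apply]
    have : ∀ i : Fin d, fderiv ℝ (fun y => fderiv ℝ (fderiv ℝ φ) y (e2 d i) (e2 d i)) x (TT J x)
        = fderiv ℝ (fderiv ℝ (fderiv ℝ φ)) x (TT J x) (e2 d i) (e2 d i) := fun i =>
      fderiv_apply_const2 hd2 x (e2 d i) (e2 d i) (TT J x)
    rw [Finset.sum_congr rfl fun i _ => this i]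
  -- the vanishing cross term
  have hvanish : ∑ i, fderiv ℝ (fderiv ℝ φ) x (e2 d i) (TT J (e2 d i)) = 0 := by
    have hTe2 : ∀ i : Fin d, TT J (e2 d i) = ((0 : Fin d → ℝ), fun k => J k i) := by
      intro i
      rw [e2, TT_apply]
      refine Prod.ext ?_ ?_
      · simp
      · funext k
        simp [Matrix.mulVec_single]
    have hexp : ∀ i : Fin d, fderiv ℝ (fderiv ℝ φ) x (e2 d i) (TT J (e2 d i))
        = ∑ k, J k i * fderiv ℝ (fderiv ℝ φ) x (e2 d i) (e2 d k) := by
      intro i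
      rw [hTe2 i, clm_apply_pair]
      simp [smul_eq_mul]
    rw [Finset.sum_congr rfl fun i _ => hexp i]
    have hJ' : ∀ i k : Fin d, J k i = -J i k := by
      intro i k
      have := congrFun (congrFun hJ i) k
      simpa [Matrix.transpose_apply] using this
    have hswap : (∑ i, ∑ k, J k i * fderiv ℝ (fderiv ℝ φ) x (e2 d i) (e2 d k))
        = -∑ i, ∑ k, J k i * fderiv ℝ (fderiv ℝ φ) x (e2 d i) (e2 d k) := by
      conv_lhs => rw [Finset.sum_comm]
      rw [← Finset.sum_neg_distrib]
      refine Finset.sum_congr rfl fun i _ => ?_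
      rw [← Finset.sum_neg_distrib]
      refine Finset.sum_congr rfl fun k _ => ?_
      rw [hJ' k i, sym2 hφ x (e2 d k) (e2 d i)]
      ring
    linarith
  -- third derivative symmetry
  have key3 : ∀ i : Fin d, fderiv ℝ (fderiv ℝ (fderiv ℝ φ)) x (e2 d i) (e2 d i) (TT J x)
      = fderiv ℝ (fderiv ℝ (fderiv ℝ φ)) x (TT J x) (e2 d i) (e2 d i) := by
    intro i
    rw [sym3_23 hφ x (e2 d i) (e2 d i) (TT J x)]
    exact congrFun (congrArg _ (sym3_12 hφ x (e2 d i) (TT J x))) (e2 d i)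
  -- put everything together
  rw [dAφ x (SS d γ x), hdL₀, Finset.sum_congr rfl fun i _ => hLapL i]
  have hsplit : ∑ i, -(fderiv ℝ (fderiv ℝ (fderiv ℝ φ)) x (e2 d i) (e2 d i) (TT J x)
      + (fderiv ℝ (fderiv ℝ φ) x (e2 d i) (TT J (e2 d i))
        + fderiv ℝ (fderiv ℝ φ) x (e2 d i) (TT J (e2 d i))))
      = -(∑ i, fderiv ℝ (fderiv ℝ (fderiv ℝ φ)) x (TT J x) (e2 d i) (e2 d i))
        - 2 * ∑ i, fderiv ℝ (fderiv ℝ φ) x (e2 d i) (TT J (e2 d i)) := by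
    rw [← Finset.sum_neg_distrib, Finset.mul_sum, ← Finset.sum_sub_distrib]
    refine Finset.sum_congr rfl fun i _ => ?_
    rw [key3 i]
    ring
  rw [hsplit, hvanish, sym2 hφ x (SS d γ x) (TT J x), TT_SS_comm]
  ring
end

section
/- Let M be a real symmetric positive definite d×d matrix, σ any real d×d matrix, J₁, J₂ real antisymmetric d×d matrices, μ, ν ∈ ℝ, and V : ℝᵈ → ℝ smooth. Define, for k = 1,…,d, the operators (C₁ₖ φ)(q,p) = (σM⁻¹∇_q φ)_k and (Bφ)(q,p) = (M⁻¹p)·∇_q φ − ∇V(q)·∇_p φ − μ(J₁∇V(q))·∇_q φ − ν(J₂M⁻¹p)·∇_p φ. Then for every smooth φ : ℝ^{2d} → ℝ and every k, C₁ₖ(Bφ) − B(C₁ₖ φ) = (−σM⁻¹∇²V(q)∇_p φ + μ σM⁻¹∇²V(q) J₁ ∇_q φ)_k pointwise, where ∇²V(q) denotes the Hessian matrix of V at q. -/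
open Matrix

/-- The position gradient `∇_q φ` on `ℝᵈ × ℝᵈ`. -/
noncomputable def gradQ {d : ℕ} (φ : (Fin d → ℝ) × (Fin d → ℝ) → ℝ)
    (x : (Fin d → ℝ) × (Fin d → ℝ)) : Fin d → ℝ :=
  fun i => fderiv ℝ φ x (Pi.single i 1, 0)

/-- The momentum gradient `∇_p φ` on `ℝᵈ × ℝᵈ`. -/
noncomputable def gradP {d : ℕ} (φ : (Fin d → ℝ) × (Fin d → ℝ) → ℝ)
    (x : (Fin d → ℝ) × (Fin d → ℝ)) : Fin d → ℝ :=
  fun i => fderiv ℝ φ x (0, Pi.single i 1)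

/-- The Hessian matrix `∇²V(q)` of `V : ℝᵈ → ℝ`. -/
noncomputable def hessV {d : ℕ} (V : (Fin d → ℝ) → ℝ) (q : Fin d → ℝ) :
    Matrix (Fin d) (Fin d) ℝ :=
  Matrix.of fun i j => fderiv ℝ (fun y => fderiv ℝ V y (Pi.single j 1)) q (Pi.single i 1)

section Aux

variable {d : ℕ}

lemma fd_fd_apply' {F : Type*} [NormedAddCommGroup F] [NormedSpace ℝ F]
    {f : F → ℝ} (hf : Differentiable ℝ (fderiv ℝ f)) (x v u : F) :
    fderiv ℝ (fun y => fderiv ℝ f y v) x u = fderiv ℝ (fderiv ℝ f) x u v := by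
  rw [fderiv_clm_apply (hf x) (differentiableAt_const v)]
  simp

lemma fd_symm' {F : Type*} [NormedAddCommGroup F] [NormedSpace ℝ F]
    {f : F → ℝ} (hf : ContDiff ℝ (⊤ : ℕ∞) f) (x v u : F) :
    fderiv ℝ (fderiv ℝ f) x u v = fderiv ℝ (fderiv ℝ f) x v u := by
  have h1 : Differentiable ℝ (fderiv ℝ f) :=
    (contDiff_infty_iff_fderiv.mp hf).2.differentiable (by simp)
  exact second_derivative_symmetric
    (fun y => (hf.differentiable (by simp) y).hasFDerivAt) (h1 x).hasFDerivAt u v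

lemma hasfd_fd' {F : Type*} [NormedAddCommGroup F] [NormedSpace ℝ F]
    {f : F → ℝ} (hf : Differentiable ℝ (fderiv ℝ f)) (x v : F) :
    HasFDerivAt (fun y => fderiv ℝ f y v) ((fderiv ℝ (fderiv ℝ f) x).flip v) x := by
  have h := (hf x).hasFDerivAt.clm_apply (hasFDerivAt_const v x)
  simpa using h

lemma hasfd_fdV' (V : (Fin d → ℝ) → ℝ) (hV' : Differentiable ℝ (fderiv ℝ V))
    (x : (Fin d → ℝ) × (Fin d → ℝ)) (v : Fin d → ℝ) :
    HasFDerivAt (fun y : (Fin d → ℝ) × (Fin d → ℝ) => fderiv ℝ V y.1 v)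
      (((fderiv ℝ (fderiv ℝ V) x.1).flip v).comp
        (ContinuousLinearMap.fst ℝ (Fin d → ℝ) (Fin d → ℝ))) x :=
  (hasfd_fd' hV' x.1 v).comp x hasFDerivAt_fst

lemma sumswap' (b c : Fin d → ℝ) (T : Fin d → Fin d → ℝ) :
    ∑ j, b j * ∑ i, c i * T i j = ∑ i, c i * ∑ j, b j * T i j := by
  simp only [Finset.mul_sum]
  rw [Finset.sum_comm]
  exact Finset.sum_congr rfl fun i _ => Finset.sum_congr rfl fun j _ => by ring

lemma sumswap2' (b p : Fin d → ℝ) (W : Fin d → Fin d → ℝ) :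
    ∑ j, b j * ∑ i, p i * W j i = ∑ i, (∑ j, b j * W j i) * p i := by
  simp only [Finset.mul_sum, Finset.sum_mul]
  rw [Finset.sum_comm]
  exact Finset.sum_congr rfl fun i _ => Finset.sum_congr rfl fun j _ => by ring

lemma sumswap3' (b q : Fin d → ℝ) (J W : Fin d → Fin d → ℝ) :
    ∑ j, b j * ∑ i, q i * (∑ m, J i m * W j m)
      = ∑ i, (∑ m, (∑ j, b j * W j m) * J i m) * q i := by
  simp only [Finset.mul_sum, Finset.sum_mul]
  rw [Finset.sum_comm]
  refine Finset.sum_congr rfl fun i _ => ?_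
  rw [Finset.sum_comm]
  refine Finset.sum_congr rfl fun m _ => Finset.sum_congr rfl fun j _ => by ring

lemma antisum' (c q : Fin d → ℝ) (J : Matrix (Fin d) (Fin d) ℝ) (hJ : Jᵀ = -J) :
    ∑ i, (∑ m, c m * J m i) * q i = -∑ i, (∑ m, c m * J i m) * q i := by
  have hent : ∀ a b, J a b = -J b a := by
    intro a b
    have := congrFun (congrFun hJ b) a
    simpa [Matrix.transpose_apply] using this
  rw [← Finset.sum_neg_distrib]
  refine Finset.sum_congr rfl fun i _ => ?_
  have : (∑ m, c m * J m i) = -∑ m, c m * J i m := by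
    rw [← Finset.sum_neg_distrib]
    exact Finset.sum_congr rfl fun m _ => by rw [hent m i]; ring
  rw [this]; ring

lemma splitsum' (b x1 x2 x3 x4 x5 x6 : Fin d → ℝ) (μ ν : ℝ) :
    ∑ j, b j * (x1 j - (x2 j + x3 j) - μ * (x4 j + x5 j) - ν * x6 j)
      = (∑ j, b j * x1 j) - ((∑ j, b j * x2 j) + (∑ j, b j * x3 j))
        - μ * ((∑ j, b j * x4 j) + (∑ j, b j * x5 j)) - ν * (∑ j, b j * x6 j) := by
  calc ∑ j, b j * (x1 j - (x2 j + x3 j) - μ * (x4 j + x5 j) - ν * x6 j)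
      = ∑ j, (b j * x1 j - (b j * x2 j + b j * x3 j)
          - μ * (b j * x4 j + b j * x5 j) - ν * (b j * x6 j)) :=
        Finset.sum_congr rfl fun j _ => by ring
    _ = _ := by
        simp only [Finset.sum_sub_distrib, Finset.sum_add_distrib, ← Finset.mul_sum]

end Aux

set_option maxHeartbeats 2000000 in
/-- The iterated hypocoercivity commutator
`[C₁ₖ, B]φ = (-σM⁻¹∇²V ∇_p φ + μ σM⁻¹∇²V J₁ ∇_q φ)_k` for
`C₁ₖ = (σM⁻¹∇_q)_k` and `B` the antisymmetric part of the generator of the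
perturbed underdamped Langevin dynamics. -/
theorem stmt15 {d : ℕ} (M σm J₁ J₂ : Matrix (Fin d) (Fin d) ℝ) (hM : M.PosDef)
    (hJ₁ : J₁ᵀ = -J₁) (hJ₂ : J₂ᵀ = -J₂) (μ ν : ℝ)
    (V : (Fin d → ℝ) → ℝ) (hV : ContDiff ℝ (⊤ : ℕ∞) V)
    (C₁ : Fin d → ((Fin d → ℝ) × (Fin d → ℝ) → ℝ) → ((Fin d → ℝ) × (Fin d → ℝ) → ℝ))
    (hC₁ : ∀ k φ x, C₁ k φ x = (σm * M⁻¹).mulVec (gradQ φ x) k)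
    (B : ((Fin d → ℝ) × (Fin d → ℝ) → ℝ) → ((Fin d → ℝ) × (Fin d → ℝ) → ℝ))
    (hB : ∀ φ x, B φ x =
      (M⁻¹.mulVec x.2 ⬝ᵥ gradQ φ x) - (gradV V x.1 ⬝ᵥ gradP φ x)
      - μ * (J₁.mulVec (gradV V x.1) ⬝ᵥ gradQ φ x)
      - ν * (J₂.mulVec (M⁻¹.mulVec x.2) ⬝ᵥ gradP φ x))
    (φ : (Fin d → ℝ) × (Fin d → ℝ) → ℝ) (hφ : ContDiff ℝ (⊤ : ℕ∞) φ) :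
    ∀ k x, C₁ k (B φ) x - B (C₁ k φ) x =
      (-((σm * M⁻¹ * hessV V x.1).mulVec (gradP φ x))
        + μ • (σm * M⁻¹ * hessV V x.1 * J₁).mulVec (gradQ φ x)) k := by
  intro k x
  have hφ1 : ContDiff ℝ (⊤:ℕ∞) φ := hφ.of_le (by simp)
  have hV1 : ContDiff ℝ (⊤:ℕ∞) V := hV.of_le (by simp)
  have hφ' : Differentiable ℝ (fderiv ℝ φ) :=
    (contDiff_infty_iff_fderiv.mp hφ1).2.differentiable (by simp)
  have hV' : Differentiable ℝ (fderiv ℝ V) :=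
    (contDiff_infty_iff_fderiv.mp hV1).2.differentiable (by simp)
  have hsy : ∀ v w, fderiv ℝ (fderiv ℝ φ) x v w = fderiv ℝ (fderiv ℝ φ) x w v :=
    fun v w => fd_symm' hφ1 x w v
  -- step A : derivative of B φ at x
  have hBφeq : B φ = fun y => (∑ i, (∑ m, M⁻¹ i m * y.2 m) * fderiv ℝ φ y (Pi.single i 1, 0))
      - (∑ i, (fderiv ℝ V y.1 (Pi.single i 1)) * fderiv ℝ φ y (0, Pi.single i 1))
      - μ * (∑ i, (∑ m, J₁ i m * fderiv ℝ V y.1 (Pi.single m 1)) * fderiv ℝ φ y (Pi.single i 1, 0))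
      - ν * (∑ i, (∑ m, J₂ i m * (∑ l, M⁻¹ m l * y.2 l)) * fderiv ℝ φ y (0, Pi.single i 1)) := by
    funext y
    rw [hB]
    simp [dotProduct, gradQ, gradP, gradV, Matrix.mulVec]
  have hy2 : ∀ m : Fin d, HasFDerivAt (fun y : (Fin d → ℝ) × (Fin d → ℝ) => y.2 m)
      ((ContinuousLinearMap.proj m).comp
        (ContinuousLinearMap.snd ℝ (Fin d → ℝ) (Fin d → ℝ))) x := by
    intro m
    exact ((ContinuousLinearMap.proj m).comp
      (ContinuousLinearMap.snd ℝ (Fin d → ℝ) (Fin d → ℝ))).hasFDerivAt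
  have hcoef1 : ∀ i : Fin d, HasFDerivAt
      (fun y : (Fin d → ℝ) × (Fin d → ℝ) => ∑ m, M⁻¹ i m * y.2 m)
      (∑ m, M⁻¹ i m • ((ContinuousLinearMap.proj m).comp
        (ContinuousLinearMap.snd ℝ (Fin d → ℝ) (Fin d → ℝ)))) x :=
    fun i => HasFDerivAt.fun_sum fun m _ => (hy2 m).const_mul _
  have hT1 := HasFDerivAt.fun_sum fun i (_ : i ∈ Finset.univ) =>
    (hcoef1 i).mul (hasfd_fd' hφ' x (Pi.single i 1, 0))
  have hT2 := HasFDerivAt.fun_sum fun i (_ : i ∈ Finset.univ) =>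
    (hasfd_fdV' V hV' x (Pi.single i 1)).mul (hasfd_fd' hφ' x (0, Pi.single i 1))
  have hT3 := HasFDerivAt.fun_sum fun i (_ : i ∈ Finset.univ) =>
    HasFDerivAt.mul
      (HasFDerivAt.fun_sum fun m (_ : m ∈ Finset.univ) =>
        (hasfd_fdV' V hV' x (Pi.single m 1)).const_mul (J₁ i m))
      (hasfd_fd' hφ' x (Pi.single i 1, 0))
  have hT4 := HasFDerivAt.fun_sum fun i (_ : i ∈ Finset.univ) =>
    HasFDerivAt.mul
      (HasFDerivAt.fun_sum fun m (_ : m ∈ Finset.univ) =>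
        (hcoef1 m).const_mul (J₂ i m))
      (hasfd_fd' hφ' x (0, Pi.single i 1))
  have hG := ((hT1.sub hT2).sub (hT3.const_mul μ)).sub (hT4.const_mul ν)
  have hfd : ∀ u, fderiv ℝ (B φ) x u =
      (∑ i, ((∑ m, M⁻¹ i m * x.2 m) * fderiv ℝ (fderiv ℝ φ) x u (Pi.single i 1, 0)
            + fderiv ℝ φ x (Pi.single i 1, 0) * (∑ m, M⁻¹ i m * u.2 m)))
      - (∑ i, (fderiv ℝ V x.1 (Pi.single i 1) * fderiv ℝ (fderiv ℝ φ) x u (0, Pi.single i 1)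
            + fderiv ℝ φ x (0, Pi.single i 1) * fderiv ℝ (fderiv ℝ V) x.1 u.1 (Pi.single i 1)))
      - μ * (∑ i, ((∑ m, J₁ i m * fderiv ℝ V x.1 (Pi.single m 1)) * fderiv ℝ (fderiv ℝ φ) x u (Pi.single i 1, 0)
            + fderiv ℝ φ x (Pi.single i 1, 0) * (∑ m, J₁ i m * fderiv ℝ (fderiv ℝ V) x.1 u.1 (Pi.single m 1))))
      - ν * (∑ i, ((∑ m, J₂ i m * (∑ l, M⁻¹ m l * x.2 l)) * fderiv ℝ (fderiv ℝ φ) x u (0, Pi.single i 1)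
            + fderiv ℝ φ x (0, Pi.single i 1) * (∑ m, J₂ i m * (∑ l, M⁻¹ m l * u.2 l)))) := by
    intro u
    rw [hBφeq]
    erw [hG.fderiv]
    simp [ContinuousLinearMap.sum_apply, ContinuousLinearMap.add_apply,
      ContinuousLinearMap.smul_apply, ContinuousLinearMap.flip_apply,
      ContinuousLinearMap.comp_apply, Finset.mul_sum]
  -- specialized, symmetrized formula
  have hFj : ∀ j, fderiv ℝ (B φ) x (Pi.single j 1, 0) =
      (∑ i, (∑ m, M⁻¹ i m * x.2 m) * fderiv ℝ (fderiv ℝ φ) x (Pi.single i 1, 0) (Pi.single j 1, 0))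
      - ((∑ i, fderiv ℝ V x.1 (Pi.single i 1) * fderiv ℝ (fderiv ℝ φ) x (0, Pi.single i 1) (Pi.single j 1, 0))
        + (∑ i, fderiv ℝ φ x (0, Pi.single i 1) * fderiv ℝ (fderiv ℝ V) x.1 (Pi.single j 1) (Pi.single i 1)))
      - μ * ((∑ i, (∑ m, J₁ i m * fderiv ℝ V x.1 (Pi.single m 1)) * fderiv ℝ (fderiv ℝ φ) x (Pi.single i 1, 0) (Pi.single j 1, 0))
        + (∑ i, fderiv ℝ φ x (Pi.single i 1, 0) * (∑ m, J₁ i m * fderiv ℝ (fderiv ℝ V) x.1 (Pi.single j 1) (Pi.single m 1))))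
      - ν * (∑ i, (∑ m, J₂ i m * (∑ l, M⁻¹ m l * x.2 l)) * fderiv ℝ (fderiv ℝ φ) x (0, Pi.single i 1) (Pi.single j 1, 0)) := by
    intro j
    rw [hfd]
    have hrw : ∀ v : (Fin d → ℝ) × (Fin d → ℝ),
        fderiv ℝ (fderiv ℝ φ) x (Pi.single j 1, (0 : Fin d → ℝ)) v
          = fderiv ℝ (fderiv ℝ φ) x v (Pi.single j 1, 0) := fun v => hsy _ _
    simp [hrw, Finset.sum_add_distrib, mul_add]
  -- step B : derivative of C₁ k φ at x
  have hψeq : C₁ k φ = fun y => ∑ j, (σm * M⁻¹) k j * fderiv ℝ φ y (Pi.single j 1, 0) := by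
    funext y
    rw [hC₁]
    simp [Matrix.mulVec, dotProduct, gradQ]
  have hψG := HasFDerivAt.fun_sum fun j (_ : j ∈ Finset.univ) =>
    (hasfd_fd' hφ' x (Pi.single j 1, 0)).const_mul ((σm * M⁻¹) k j)
  have hψfd : ∀ u, fderiv ℝ (C₁ k φ) x u
      = ∑ j, (σm * M⁻¹) k j * fderiv ℝ (fderiv ℝ φ) x u (Pi.single j 1, 0) := by
    intro u
    rw [hψeq, hψG.fderiv]
    simp
  -- step C : B applied to C₁ k φ
  have hBψ : B (C₁ k φ) x =
      (∑ i, (∑ m, M⁻¹ i m * x.2 m) * ∑ j, (σm * M⁻¹) k j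
          * fderiv ℝ (fderiv ℝ φ) x (Pi.single i 1, 0) (Pi.single j 1, 0))
      - (∑ i, fderiv ℝ V x.1 (Pi.single i 1) * ∑ j, (σm * M⁻¹) k j
          * fderiv ℝ (fderiv ℝ φ) x (0, Pi.single i 1) (Pi.single j 1, 0))
      - μ * (∑ i, (∑ m, J₁ i m * fderiv ℝ V x.1 (Pi.single m 1)) * ∑ j, (σm * M⁻¹) k j
          * fderiv ℝ (fderiv ℝ φ) x (Pi.single i 1, 0) (Pi.single j 1, 0))
      - ν * (∑ i, (∑ m, J₂ i m * (∑ l, M⁻¹ m l * x.2 l)) * ∑ j, (σm * M⁻¹) k j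
          * fderiv ℝ (fderiv ℝ φ) x (0, Pi.single i 1) (Pi.single j 1, 0)) := by
    rw [hB]
    simp [dotProduct, gradQ, gradP, gradV, Matrix.mulVec, hψfd]
  -- step D : right-hand side
  have hRHS : (-((σm * M⁻¹ * hessV V x.1).mulVec (gradP φ x))
        + μ • (σm * M⁻¹ * hessV V x.1 * J₁).mulVec (gradQ φ x)) k =
      -(∑ i, (∑ j, (σm * M⁻¹) k j
            * fderiv ℝ (fderiv ℝ V) x.1 (Pi.single j 1) (Pi.single i 1))
          * fderiv ℝ φ x (0, Pi.single i 1))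
      + μ * (∑ i, (∑ m, (∑ j, (σm * M⁻¹) k j
            * fderiv ℝ (fderiv ℝ V) x.1 (Pi.single j 1) (Pi.single m 1)) * J₁ m i)
          * fderiv ℝ φ x (Pi.single i 1, 0)) := by
    simp only [Pi.add_apply, Pi.neg_apply, Pi.smul_apply, smul_eq_mul, Matrix.mulVec,
      dotProduct, Matrix.mul_apply, gradP, gradQ, hessV, Matrix.of_apply,
      fd_fd_apply' hV']
  -- step E : left-hand side of the commutator
  have hL : C₁ k (B φ) x = ∑ j, (σm * M⁻¹) k j * fderiv ℝ (B φ) x (Pi.single j 1, 0) := by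
    rw [hC₁]
    simp [Matrix.mulVec, dotProduct, gradQ]
  -- swap lemmas instances
  have e1 : ∑ j, (σm * M⁻¹) k j * ∑ i, (∑ m, M⁻¹ i m * x.2 m)
        * fderiv ℝ (fderiv ℝ φ) x (Pi.single i 1, 0) (Pi.single j 1, 0)
      = ∑ i, (∑ m, M⁻¹ i m * x.2 m) * ∑ j, (σm * M⁻¹) k j
        * fderiv ℝ (fderiv ℝ φ) x (Pi.single i 1, 0) (Pi.single j 1, 0) :=
    sumswap' _ _ _
  have e2 : ∑ j, (σm * M⁻¹) k j * ∑ i, fderiv ℝ V x.1 (Pi.single i 1)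
        * fderiv ℝ (fderiv ℝ φ) x (0, Pi.single i 1) (Pi.single j 1, 0)
      = ∑ i, fderiv ℝ V x.1 (Pi.single i 1) * ∑ j, (σm * M⁻¹) k j
        * fderiv ℝ (fderiv ℝ φ) x (0, Pi.single i 1) (Pi.single j 1, 0) :=
    sumswap' _ _ _
  have e3 : ∑ j, (σm * M⁻¹) k j * ∑ i, (∑ m, J₁ i m * fderiv ℝ V x.1 (Pi.single m 1))
        * fderiv ℝ (fderiv ℝ φ) x (Pi.single i 1, 0) (Pi.single j 1, 0)
      = ∑ i, (∑ m, J₁ i m * fderiv ℝ V x.1 (Pi.single m 1)) * ∑ j, (σm * M⁻¹) k j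
        * fderiv ℝ (fderiv ℝ φ) x (Pi.single i 1, 0) (Pi.single j 1, 0) :=
    sumswap' _ _ _
  have e4 : ∑ j, (σm * M⁻¹) k j * ∑ i, (∑ m, J₂ i m * (∑ l, M⁻¹ m l * x.2 l))
        * fderiv ℝ (fderiv ℝ φ) x (0, Pi.single i 1) (Pi.single j 1, 0)
      = ∑ i, (∑ m, J₂ i m * (∑ l, M⁻¹ m l * x.2 l)) * ∑ j, (σm * M⁻¹) k j
        * fderiv ℝ (fderiv ℝ φ) x (0, Pi.single i 1) (Pi.single j 1, 0) :=
    sumswap' _ _ _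
  have e5 : ∑ j, (σm * M⁻¹) k j * ∑ i, fderiv ℝ φ x (0, Pi.single i 1)
        * fderiv ℝ (fderiv ℝ V) x.1 (Pi.single j 1) (Pi.single i 1)
      = ∑ i, (∑ j, (σm * M⁻¹) k j
          * fderiv ℝ (fderiv ℝ V) x.1 (Pi.single j 1) (Pi.single i 1))
        * fderiv ℝ φ x (0, Pi.single i 1) :=
    sumswap2' _ _ _
  have e6 : ∑ j, (σm * M⁻¹) k j * ∑ i, fderiv ℝ φ x (Pi.single i 1, 0)
        * (∑ m, J₁ i m * fderiv ℝ (fderiv ℝ V) x.1 (Pi.single j 1) (Pi.single m 1))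
      = ∑ i, (∑ m, (∑ j, (σm * M⁻¹) k j
          * fderiv ℝ (fderiv ℝ V) x.1 (Pi.single j 1) (Pi.single m 1)) * J₁ i m)
        * fderiv ℝ φ x (Pi.single i 1, 0) :=
    sumswap3' _ _ _ _
  have e7 : ∑ i, (∑ m, (∑ j, (σm * M⁻¹) k j
          * fderiv ℝ (fderiv ℝ V) x.1 (Pi.single j 1) (Pi.single m 1)) * J₁ m i)
        * fderiv ℝ φ x (Pi.single i 1, 0)
      = -∑ i, (∑ m, (∑ j, (σm * M⁻¹) k j
          * fderiv ℝ (fderiv ℝ V) x.1 (Pi.single j 1) (Pi.single m 1)) * J₁ i m)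
        * fderiv ℝ φ x (Pi.single i 1, 0) :=
    antisum' _ _ J₁ hJ₁
  have hsplit : ∑ j, (σm * M⁻¹) k j *
        ((∑ i, (∑ m, M⁻¹ i m * x.2 m)
            * fderiv ℝ (fderiv ℝ φ) x (Pi.single i 1, 0) (Pi.single j 1, 0))
        - ((∑ i, fderiv ℝ V x.1 (Pi.single i 1)
            * fderiv ℝ (fderiv ℝ φ) x (0, Pi.single i 1) (Pi.single j 1, 0))
          + (∑ i, fderiv ℝ φ x (0, Pi.single i 1)
            * fderiv ℝ (fderiv ℝ V) x.1 (Pi.single j 1) (Pi.single i 1)))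
        - μ * ((∑ i, (∑ m, J₁ i m * fderiv ℝ V x.1 (Pi.single m 1))
            * fderiv ℝ (fderiv ℝ φ) x (Pi.single i 1, 0) (Pi.single j 1, 0))
          + (∑ i, fderiv ℝ φ x (Pi.single i 1, 0)
            * ∑ m, J₁ i m * fderiv ℝ (fderiv ℝ V) x.1 (Pi.single j 1) (Pi.single m 1)))
        - ν * (∑ i, (∑ m, J₂ i m * ∑ l, M⁻¹ m l * x.2 l)
            * fderiv ℝ (fderiv ℝ φ) x (0, Pi.single i 1) (Pi.single j 1, 0)))
      = (∑ j, (σm * M⁻¹) k j * ∑ i, (∑ m, M⁻¹ i m * x.2 m)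
            * fderiv ℝ (fderiv ℝ φ) x (Pi.single i 1, 0) (Pi.single j 1, 0))
        - ((∑ j, (σm * M⁻¹) k j * ∑ i, fderiv ℝ V x.1 (Pi.single i 1)
            * fderiv ℝ (fderiv ℝ φ) x (0, Pi.single i 1) (Pi.single j 1, 0))
          + (∑ j, (σm * M⁻¹) k j * ∑ i, fderiv ℝ φ x (0, Pi.single i 1)
            * fderiv ℝ (fderiv ℝ V) x.1 (Pi.single j 1) (Pi.single i 1)))
        - μ * ((∑ j, (σm * M⁻¹) k j * ∑ i, (∑ m, J₁ i m * fderiv ℝ V x.1 (Pi.single m 1))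
            * fderiv ℝ (fderiv ℝ φ) x (Pi.single i 1, 0) (Pi.single j 1, 0))
          + (∑ j, (σm * M⁻¹) k j * ∑ i, fderiv ℝ φ x (Pi.single i 1, 0)
            * ∑ m, J₁ i m * fderiv ℝ (fderiv ℝ V) x.1 (Pi.single j 1) (Pi.single m 1)))
        - ν * (∑ j, (σm * M⁻¹) k j * ∑ i, (∑ m, J₂ i m * ∑ l, M⁻¹ m l * x.2 l)
            * fderiv ℝ (fderiv ℝ φ) x (0, Pi.single i 1) (Pi.single j 1, 0)) :=
    splitsum' _ _ _ _ _ _ _ μ ν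
  -- final assembly
  rw [hL, hBψ, hRHS]
  simp only [hFj]
  rw [hsplit, ← e1, ← e2, ← e3, ← e4, ← e5, e7, ← e6]
  ring
end

section
/- Let K₀ be a real symmetric d×d matrix with Tr(K₀) = 0. Then there exist a real symmetric d×d matrix A and a real antisymmetric d×d matrix J such that K₀ = A·J − J·A. -/
/-!
Diagonalize `K₀ = U D Uᵀ` with `U` orthogonal; since `tr K₀ = 0`, the eigenvalues `v` sum to zero.
For any `B`, the matrices `A = (B + Bᵀ)/2` and `J = B - Bᵀ` satisfy `A J - J A = BᵀB - BBᵀ`, and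
conjugation by `U` commutes with `B ↦ BᵀB - BBᵀ`, so it suffices to find `B` with `BᵀB - BBᵀ = D`.
For the weighted cyclic shift `B = diag(β) P_σ` one gets `BᵀB - BBᵀ = diag(β² ∘ σ - β²)`. A
zero-sum `v` is a discrete derivative `w ∘ σ - w` along the cycle `σ` (take partial sums), and
`w` can be shifted by a constant to become nonnegative, so `β = √w` works.
-/

open Matrix

namespace Matrix

variable {n R : Type*} [Fintype n]

lemma exists_symm_antisymm_commutator_eq_transpose_mul_self_sub [Field R] [NeZero (2 : R)]
    (B : Matrix n n R) :
    ∃ A J : Matrix n n R, Aᵀ = A ∧ Jᵀ = -J ∧ Bᵀ * B - B * Bᵀ = A * J - J * A := by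
  refine ⟨(2 : R)⁻¹ • (B + Bᵀ), B - Bᵀ, by simp [add_comm], by simp, ?_⟩
  have h : (B + Bᵀ) * (B - Bᵀ) - (B - Bᵀ) * (B + Bᵀ) = (2 : R) • (Bᵀ * B - B * Bᵀ) := by
    rw [two_smul]
    noncomm_ring
  rw [Matrix.smul_mul, Matrix.mul_smul, ← smul_sub, h, smul_smul, inv_mul_cancel₀ two_ne_zero,
    one_smul]

variable [DecidableEq n]

lemma transpose_mul_self_sub_mul_transpose_conj [CommRing R] {U : Matrix n n R}
    (hU : Uᵀ * U = 1) (B : Matrix n n R) :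
    (U * B * Uᵀ)ᵀ * (U * B * Uᵀ) - U * B * Uᵀ * (U * B * Uᵀ)ᵀ = U * (Bᵀ * B - B * Bᵀ) * Uᵀ := by
  simp only [transpose_mul, transpose_transpose, Matrix.mul_assoc, ← Matrix.mul_assoc Uᵀ U, hU,
    Matrix.one_mul, Matrix.mul_sub, Matrix.sub_mul]

lemma transpose_mul_self_sub_mul_transpose_diagonal_submatrix [CommRing R] (β : n → R)
    (σ : Equiv.Perm n) :
    ((diagonal β).submatrix (Equiv.refl n) σ)ᵀ * (diagonal β).submatrix (Equiv.refl n) σ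
      - (diagonal β).submatrix (Equiv.refl n) σ * ((diagonal β).submatrix (Equiv.refl n) σ)ᵀ
      = diagonal (fun i => β (σ i) ^ 2 - β i ^ 2) := by
  rw [transpose_submatrix, submatrix_mul_equiv, submatrix_mul_equiv]
  simp [sq]

lemma exists_transpose_mul_self_sub_mul_transpose_eq_diagonal (σ : Equiv.Perm n) (w : n → ℝ) :
    ∃ B : Matrix n n ℝ, Bᵀ * B - B * Bᵀ = diagonal (w ∘ σ - w) := by
  set c := ∑ i, |w i|
  have hc (i : n) : 0 ≤ w i + c := by
    have := Finset.single_le_sum (fun j _ => abs_nonneg (w j)) (Finset.mem_univ i)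
    linarith [neg_abs_le (w i)]
  refine ⟨(diagonal fun i => √(w i + c)).submatrix (Equiv.refl n) σ, ?_⟩
  rw [transpose_mul_self_sub_mul_transpose_diagonal_submatrix]
  congr 1
  funext i
  simp [Real.sq_sqrt (hc _)]

lemma exists_orthogonal_conj_diagonal {K : Matrix n n ℝ} (hK : Kᵀ = K) :
    ∃ (U : Matrix n n ℝ) (v : n → ℝ), Uᵀ * U = 1 ∧ K = U * diagonal v * Uᵀ := by
  have hK' : K.IsHermitian := by
    rwa [IsHermitian, conjTranspose_eq_transpose_of_trivial]
  refine ⟨hK'.eigenvectorUnitary, hK'.eigenvalues, ?_, ?_⟩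
  · exact (mem_orthogonalGroup_iff' _ _).1 hK'.eigenvectorUnitary.2
  · simpa [star_eq_conjTranspose] using hK'.spectral_theorem

end Matrix

lemma exists_comp_finRotate_sub_eq {d : ℕ} (v : Fin d → ℝ) (hv : ∑ i, v i = 0) :
    ∃ w : Fin d → ℝ, w ∘ finRotate d - w = v := by
  cases d with
  | zero => exact ⟨0, funext fun i => i.elim0⟩
  | succ n =>
    refine ⟨fun i => ∑ k ∈ Finset.Iio i, v k, funext fun i => ?_⟩
    rcases eq_or_ne i (Fin.last n) with rfl | hi
    · rw [Fin.sum_univ_castSucc] at hv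
      have h0 : Finset.Iio (0 : Fin (n + 1)) = ∅ := Finset.Iio_eq_empty.2 isMin_bot
      simp [h0]
      linarith
    · have hi' : (i : ℕ) + 1 < n + 1 := by simpa using Fin.val_lt_last hi
      simp [Fin.Iio_add_one_eq_Iic hi', ← Finset.Iio_insert]

/-- Lemma 4.12(a) (zero variance limit for purely quadratic observables): every
real symmetric traceless matrix `K₀` is a commutator `K₀ = A J - J A` with `A`
symmetric and `J` antisymmetric. -/
theorem stmt18 {d : ℕ} (K₀ : Matrix (Fin d) (Fin d) ℝ) (hK : K₀ᵀ = K₀)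
    (htr : K₀.trace = 0) :
    ∃ (A J : Matrix (Fin d) (Fin d) ℝ), Aᵀ = A ∧ Jᵀ = -J ∧ K₀ = A * J - J * A := by
  obtain ⟨U, v, hU, rfl⟩ := exists_orthogonal_conj_diagonal hK
  have hv : ∑ i, v i = 0 := by rwa [trace_mul_cycle, hU, Matrix.one_mul, trace_diagonal] at htr
  obtain ⟨w, hw⟩ := exists_comp_finRotate_sub_eq v hv
  obtain ⟨B, hB⟩ := exists_transpose_mul_self_sub_mul_transpose_eq_diagonal (finRotate d) w
  obtain ⟨A, J, hA, hJ, hAJ⟩ :=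
    exists_symm_antisymm_commutator_eq_transpose_mul_self_sub (U * B * Uᵀ)
  refine ⟨A, J, hA, hJ, ?_⟩
  rw [← hAJ, transpose_mul_self_sub_mul_transpose_conj hU, hB, hw]
end

section
/- Let V : ℝᵈ → ℝ be twice continuously differentiable, Γ a real symmetric positive definite d×d matrix, J₁, J₂ real antisymmetric d×d matrices, and μ, ν ∈ ℝ. Set G = νJ₂ + Γ (which is invertible). Then the unnormalized density e^{−V} is a stationary solution of the Fokker–Planck equation of the limiting overdamped dynamics: for all x ∈ ℝᵈ, ∇·( e^{−V(x)}·( G⁻¹ + μJ₁ − G⁻¹Γ(−νJ₂ + Γ)⁻¹ )·∇V(x) ) = 0. -/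
/-!
Since `G + Gᵀ = 2Γ`, we get `G⁻¹ + G⁻ᵀ = G⁻¹(G + Gᵀ)G⁻ᵀ = 2G⁻¹ΓG⁻ᵀ`, and as `Gᵀ = -νJ₂ + Γ` the
matrix `A = G⁻¹ + μJ₁ - G⁻¹Γ(-νJ₂ + Γ)⁻¹` is antisymmetric; `G` is invertible because its
quadratic form is that of `Γ`. For antisymmetric `A`,
`∇·(e^{-V} A∇V) = e^{-V} ∑ᵢⱼ Aᵢⱼ (∂ᵢ∂ⱼV - ∂ᵢV ∂ⱼV)`, which vanishes because the bracket is
symmetric in `i, j` by Schwarz's theorem.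
-/

open Matrix

section CharZero

variable {n R : Type*} [Fintype n] [CommRing R] [NoZeroDivisors R] [CharZero R]

theorem Matrix.dotProduct_mulVec_self_eq_zero_of_transpose_eq_neg_s19 {K : Matrix n n R}
    (hK : Kᵀ = -K) (v : n → R) : v ⬝ᵥ (K *ᵥ v) = 0 :=
  CharZero.eq_neg_self_iff.mp <|
    calc v ⬝ᵥ (K *ᵥ v) = (Kᵀ *ᵥ v) ⬝ᵥ v := by rw [dotProduct_mulVec, mulVec_transpose]
      _ = -(v ⬝ᵥ (K *ᵥ v)) := by rw [hK, neg_mulVec, neg_dotProduct, dotProduct_comm]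

theorem Matrix.sum_mul_eq_zero_of_transpose_eq_neg_of_isSymm {A S : Matrix n n R} (hA : Aᵀ = -A)
    (hS : S.IsSymm) : ∑ i, ∑ j, A i j * S i j = 0 :=
  CharZero.eq_neg_self_iff.mp <| by
    conv_lhs => rw [Finset.sum_comm]
    simp only [← Finset.sum_neg_distrib]
    refine Finset.sum_congr rfl fun i _ => Finset.sum_congr rfl fun j _ => ?_
    rw [← transpose_apply A j i, hA, ← transpose_apply S j i, hS.eq, neg_apply, neg_mul, neg_neg]

end CharZero

theorem Matrix.PosDef.isUnit_add_of_transpose_eq_neg {n R : Type*} [Fintype n] [DecidableEq n]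
    [Field R] [LinearOrder R] [IsStrictOrderedRing R] [StarRing R] [TrivialStar R]
    {Γ K : Matrix n n R} (hΓ : Γ.PosDef) (hK : Kᵀ = -K) : IsUnit (K + Γ) := by
  by_contra h
  obtain ⟨v, hv, hKΓv⟩ : ∃ v ≠ 0, (K + Γ) *ᵥ v = 0 := by
    obtain ⟨a, b, hab⟩ := Function.not_injective_iff.mp <| mulVec_injective_iff_isUnit.not.mpr h
    exact ⟨a - b, by simp [sub_eq_zero, hab, mulVec_sub]⟩
  have hpos := hΓ.dotProduct_mulVec_pos hv
  rw [star_trivial] at hpos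
  have hzero := congrArg (v ⬝ᵥ ·) hKΓv
  simp only [add_mulVec, dotProduct_add, dotProduct_mulVec_self_eq_zero_of_transpose_eq_neg_s19 hK,
    zero_add, dotProduct_zero] at hzero
  exact hpos.ne' hzero

theorem Matrix.transpose_inv_sub_inv_mul_mul_inv_transpose {n R : Type*} [Fintype n]
    [DecidableEq n] [CommRing R] {G Γ : Matrix n n R} (hG : IsUnit G.det) (hΓ : Γ.IsSymm)
    (hsum : G + Gᵀ = Γ + Γ) :
    (G⁻¹ - G⁻¹ * Γ * Gᵀ⁻¹)ᵀ = -(G⁻¹ - G⁻¹ * Γ * Gᵀ⁻¹) := by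
  have hGT : IsUnit Gᵀ.det := by rwa [det_transpose]
  have key : G⁻¹ + Gᵀ⁻¹ = G⁻¹ * Γ * Gᵀ⁻¹ + G⁻¹ * Γ * Gᵀ⁻¹ :=
    calc G⁻¹ + Gᵀ⁻¹ = G⁻¹ * (G + Gᵀ) * Gᵀ⁻¹ := by
          rw [mul_add, add_mul, nonsing_inv_mul _ hG, one_mul, mul_assoc,
            mul_nonsing_inv _ hGT, mul_one, add_comm]
      _ = _ := by rw [hsum, mul_add, add_mul]
  have hsymm : (G⁻¹ * Γ * Gᵀ⁻¹)ᵀ = G⁻¹ * Γ * Gᵀ⁻¹ := by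
    rw [transpose_mul, transpose_mul, transpose_nonsing_inv, transpose_nonsing_inv,
      transpose_transpose, hΓ.eq, mul_assoc]
  rw [transpose_sub, hsymm, transpose_nonsing_inv, neg_sub, eq_sub_iff_add_eq,
    sub_add_eq_add_sub, add_comm, key, add_sub_cancel_right]

theorem map_eq_sum_mul_map_single {ι R F : Type*} [Fintype ι] [DecidableEq ι] [CommSemiring R]
    [FunLike F (ι → R) R] [LinearMapClass F R (ι → R) R] (L : F) (v : ι → R) :
    L v = ∑ j, v j * L (Pi.single j 1) := by
  conv_lhs => rw [← Finset.univ_sum_single v]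
  refine (map_sum L _ _).trans (Finset.sum_congr rfl fun j _ => ?_)
  rw [← smul_eq_mul, ← map_smul, ← Pi.single_smul', smul_eq_mul, mul_one]

theorem fderiv_exp_neg_mul_fderiv_apply {E : Type*} [NormedAddCommGroup E] [NormedSpace ℝ E]
    {V : E → ℝ} {x : E} (hV : ContDiffAt ℝ 2 V x) (v w : E) :
    fderiv ℝ (fun y => Real.exp (-V y) * fderiv ℝ V y v) x w =
      Real.exp (-V x) * (fderiv ℝ (fderiv ℝ V) x w v - fderiv ℝ V x w * fderiv ℝ V x v) := by
  have hV₁ : DifferentiableAt ℝ V x := hV.differentiableAt (by norm_num)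
  have hV₂ : DifferentiableAt ℝ (fderiv ℝ V) x :=
    (hV.fderiv_right (m := 1) (by norm_num)).differentiableAt one_ne_zero
  have hexp : HasFDerivAt (fun y => Real.exp (-V y)) (Real.exp (-V x) • -fderiv ℝ V x) x :=
    (Real.hasDerivAt_exp _).comp_hasFDerivAt x hV₁.hasFDerivAt.neg
  have hgrad : HasFDerivAt (fun y => fderiv ℝ V y v) ((fderiv ℝ (fderiv ℝ V) x).flip v) x := by
    simpa using hV₂.hasFDerivAt.clm_apply (hasFDerivAt_const v x)
  rw [(hexp.fun_mul hgrad).fderiv]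
  simp only [_root_.add_apply, _root_.smul_apply,
    ContinuousLinearMap.flip_apply, _root_.neg_apply, smul_eq_mul]
  ring

theorem sum_fderiv_exp_neg_mul_mulVec_gradient_eq_zero {ι : Type*} [Fintype ι] [DecidableEq ι]
    {V : (ι → ℝ) → ℝ} {x : ι → ℝ} (hV : ContDiffAt ℝ 2 V x) {A : Matrix ι ι ℝ}
    (hA : Aᵀ = -A) :
    ∑ i, fderiv ℝ (fun y => Real.exp (-V y) *
        (A *ᵥ fun j => fderiv ℝ V y (Pi.single j 1)) i) x (Pi.single i 1) = 0 := by
  have hrow : ∀ (L : (ι → ℝ) →L[ℝ] ℝ) i, (A *ᵥ fun j => L (Pi.single j 1)) i = L (A i) :=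
    fun L i => (map_eq_sum_mul_map_single L (A i)).symm
  simp only [hrow, fderiv_exp_neg_mul_fderiv_apply hV]
  set S : Matrix ι ι ℝ := .of fun i j =>
    fderiv ℝ (fderiv ℝ V) x (Pi.single i 1) (Pi.single j 1) -
      fderiv ℝ V x (Pi.single i 1) * fderiv ℝ V x (Pi.single j 1)
  have hS : S.IsSymm := IsSymm.ext fun i j => by
    simp only [S, of_apply, (hV.isSymmSndFDerivAt (by simp)).eq (Pi.single i 1), mul_comm]
  have hterm : ∀ i, fderiv ℝ (fderiv ℝ V) x (Pi.single i 1) (A i) -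
      fderiv ℝ V x (Pi.single i 1) * fderiv ℝ V x (A i) = ∑ j, A i j * S i j := fun i => by
    rw [map_eq_sum_mul_map_single (fderiv ℝ (fderiv ℝ V) x (Pi.single i 1)) (A i),
      map_eq_sum_mul_map_single (fderiv ℝ V x) (A i), Finset.mul_sum, ← Finset.sum_sub_distrib]
    simp only [S, of_apply]
    exact Finset.sum_congr rfl fun j _ => by ring
  simp only [hterm, ← Finset.mul_sum, sum_mul_eq_zero_of_transpose_eq_neg_of_isSymm hA hS,
    mul_zero]

/-- The target density `e^{-V}` is stationary for the Fokker–Planck operator of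
the limiting overdamped dynamics: with `G = νJ₂ + Γ` (invertible),
`∇·( e^{-V} (G⁻¹ + μJ₁ - G⁻¹Γ(-νJ₂+Γ)⁻¹) ∇V ) = 0`. -/
theorem stmt19 {d : ℕ} (V : (Fin d → ℝ) → ℝ) (hV : ContDiff ℝ 2 V)
    (Γ J₁ J₂ : Matrix (Fin d) (Fin d) ℝ) (hΓ : Γ.PosDef)
    (hJ₁ : J₁ᵀ = -J₁) (hJ₂ : J₂ᵀ = -J₂) (μ ν : ℝ)
    (G : Matrix (Fin d) (Fin d) ℝ) (hG : G = ν • J₂ + Γ) :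
    IsUnit G ∧
    ∀ x : Fin d → ℝ,
      ∑ i, fderiv ℝ (fun y => Real.exp (-V y) *
          ((G⁻¹ + μ • J₁ - G⁻¹ * Γ * (-(ν • J₂) + Γ)⁻¹).mulVec
            (fun j => fderiv ℝ V y (Pi.single j 1))) i)
        x (Pi.single i 1) = 0 := by
  have hΓsymm : Γ.IsSymm := isHermitian_iff_isSymm.mp hΓ.isHermitian
  have hνJ₂ : (ν • J₂)ᵀ = -(ν • J₂) := by rw [transpose_smul, hJ₂, smul_neg]
  have hGunit : IsUnit G := hG ▸ hΓ.isUnit_add_of_transpose_eq_neg hνJ₂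
  have hGT : Gᵀ = -(ν • J₂) + Γ := by rw [hG, transpose_add, hνJ₂, hΓsymm.eq]
  have hGsum : G + Gᵀ = Γ + Γ := by rw [hGT, hG]; abel
  have hskew : (G⁻¹ + μ • J₁ - G⁻¹ * Γ * (-(ν • J₂) + Γ)⁻¹)ᵀ =
      -(G⁻¹ + μ • J₁ - G⁻¹ * Γ * (-(ν • J₂) + Γ)⁻¹) := by
    rw [← hGT, add_sub_right_comm, transpose_add,
      transpose_inv_sub_inv_mul_mul_inv_transpose (G.isUnit_iff_isUnit_det.mp hGunit) hΓsymm hGsum,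
      transpose_smul, hJ₁, smul_neg, neg_add]
  exact ⟨hGunit, fun x => sum_fderiv_exp_neg_mul_mulVec_gradient_eq_zero hV.contDiffAt hskew⟩
end
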